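/- arXiv:1212.3276 — 9 statements merged into one kernel-verified Lean document; each statement's English description precedes it below -/
import Mathlib

section
/- Let k be a power of 2 and d = k². Let x_1,...,x_d ∈ {±1}^d be the rows of a Hadamard matrix of order d. Then for every sign vector y ∈ {±1}^d, there exists w ∈ [−1,1]^d with ‖w‖₁ ≤ k such that for all i ∈ [d], y[i]·⟨w, x_i⟩ = 1. -/
/-!
Take `w = d⁻¹ • Hᵀ y`. Since `H Hᵀ = d • 1`, we get `H w = y`, which is the required identity
because `y i * y i = 1`. Each coordinate of `w` is an average of `d` signs, so `w ∈ [-1, 1]^d`;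
and `‖w‖₂² = d⁻¹ ⟪y, y⟫ = 1`, so Cauchy–Schwarz gives `‖w‖₁ ≤ √d ‖w‖₂ = k`.
-/

open Matrix Finset

section
variable {ι : Type*} [Fintype ι]

theorem mulVec_inv_smul_transpose_mulVec [DecidableEq ι] {H : Matrix ι ι ℝ} {c : ℝ}
    (hH : H * Hᵀ = c • 1) (hc : c ≠ 0) (y : ι → ℝ) : H *ᵥ (c⁻¹ • Hᵀ *ᵥ y) = y := by
  rw [mulVec_smul, mulVec_mulVec, hH, smul_mulVec, one_mulVec, smul_smul, inv_mul_cancel₀ hc,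
    one_smul]

theorem dotProduct_self_inv_smul_transpose_mulVec [DecidableEq ι] {H : Matrix ι ι ℝ} {c : ℝ}
    (hH : H * Hᵀ = c • 1) (hc : c ≠ 0) (y : ι → ℝ) :
    (c⁻¹ • Hᵀ *ᵥ y) ⬝ᵥ (c⁻¹ • Hᵀ *ᵥ y) = c⁻¹ * (y ⬝ᵥ y) := by
  conv_lhs => rw [dotProduct_smul, dotProduct_mulVec, vecMul_transpose,
    mulVec_inv_smul_transpose_mulVec hH hc]
  rfl

theorem abs_mulVec_le_card {A : Matrix ι ι ℝ} (hA : ∀ i j, |A i j| ≤ 1) {v : ι → ℝ}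
    (hv : ∀ j, |v j| ≤ 1) (i : ι) : |(A *ᵥ v) i| ≤ Fintype.card ι :=
  calc |(A *ᵥ v) i| ≤ ∑ j, |A i j * v j| := abs_sum_le_sum_abs _ _
    _ ≤ ∑ _j : ι, (1 : ℝ) := sum_le_sum fun j _ => by
        rw [abs_mul]; exact mul_le_one₀ (hA i j) (abs_nonneg _) (hv j)
    _ = Fintype.card ι := by simp

theorem sum_abs_le_sqrt_card_mul_dotProduct_self (w : ι → ℝ) :
    ∑ i, |w i| ≤ √(Fintype.card ι * (w ⬝ᵥ w)) := by
  refine Real.le_sqrt_of_sq_le ?_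
  simpa [dotProduct, sq] using sq_sum_le_card_mul_sum_sq (s := univ) (f := fun i => |w i|)

theorem dotProduct_self_eq_card_of_sign {y : ι → ℝ}
    (hy : ∀ i, y i = 1 ∨ y i = -1) : y ⬝ᵥ y = Fintype.card ι := by
  simp [dotProduct, fun i => mul_self_eq_one_iff.2 (hy i)]

end

theorem stmt2_general (k : ℕ) (d : ℕ) (hd : d = k ^ 2)
    (H : Matrix (Fin d) (Fin d) ℝ)
    (hentries : ∀ i l, H i l = 1 ∨ H i l = -1)
    (hHad : H * H.transpose = (d : ℝ) • 1) :
    ∀ y : Fin d → ℝ, (∀ i, y i = 1 ∨ y i = -1) →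
      ∃ w : Fin d → ℝ, (∀ i, w i ∈ Set.Icc (-1 : ℝ) 1) ∧ (∑ i, |w i|) ≤ k ∧
        ∀ i, y i * (∑ l, w l * H i l) = 1 := by
  intro y hy
  obtain rfl | hd0 := eq_or_ne d 0
  · exact ⟨0, finZeroElim, by simp, finZeroElim⟩
  have hd' : (d : ℝ) ≠ 0 := Nat.cast_ne_zero.2 hd0
  have hH1 : ∀ i l, |Hᵀ i l| ≤ 1 := fun i l => ((abs_eq zero_le_one).2 (hentries l i)).le
  set w := (d : ℝ)⁻¹ • Hᵀ *ᵥ y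
  have hHw : H *ᵥ w = y := mulVec_inv_smul_transpose_mulVec hHad hd' y
  have hww : w ⬝ᵥ w = 1 := by
    rw [dotProduct_self_inv_smul_transpose_mulVec hHad hd', dotProduct_self_eq_card_of_sign hy,
      Fintype.card_fin, inv_mul_cancel₀ hd']
  refine ⟨w, fun l => abs_le.1 ?_, ?_, fun i => ?_⟩
  · have hHy := abs_mulVec_le_card hH1 (fun i => ((abs_eq zero_le_one).2 (hy i)).le) l
    rw [Fintype.card_fin] at hHy
    simpa [w, abs_mul] using inv_mul_le_one_of_le₀ hHy (Nat.cast_nonneg d)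
  · calc ∑ i, |w i| ≤ √(d * (w ⬝ᵥ w)) := by
          simpa using sum_abs_le_sqrt_card_mul_dotProduct_self w
      _ = k := by rw [hww, mul_one, hd, Nat.cast_pow, Real.sqrt_sq (Nat.cast_nonneg k)]
  · have hHwi : ∑ l, w l * H i l = y i := by
      simpa [mulVec, dotProduct, mul_comm] using congrFun hHw i
    rw [hHwi, mul_self_eq_one_iff.2 (hy i)]

/-- Shattering with the linear loss via a Hadamard matrix: if `k` is a power of two,
`d = k²`, and `H` is a `d × d` Hadamard matrix (±1 entries, orthogonal rows), then for every
sign vector `y` there is `w ∈ [−1,1]^d` with `‖w‖₁ ≤ k` such that `y[i]·⟨w, H i⟩ = 1`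
for every row `i`. -/
theorem stmt2 (k j : ℕ) (hk : k = 2 ^ j) (d : ℕ) (hd : d = k ^ 2)
    (H : Matrix (Fin d) (Fin d) ℝ)
    (hentries : ∀ i l, H i l = 1 ∨ H i l = -1)
    (hHad : H * H.transpose = (d : ℝ) • 1) :
    ∀ y : Fin d → ℝ, (∀ i, y i = 1 ∨ y i = -1) →
      ∃ w : Fin d → ℝ, (∀ i, w i ∈ Set.Icc (-1 : ℝ) 1) ∧ (∑ i, |w i|) ≤ k ∧
        ∀ i, y i * (∑ l, w l * H i l) = 1 :=
  stmt2_general k d hd H hentries hHad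
end

section
/- Let k be a power of 2 and d = 2k²+1. There exists a set {x_1,...,x_{k²}} ⊆ {0,1}^d such that for every y ∈ {±1}^{k²}, there exists a vector w ∈ ℝ_+^d with ‖w‖₁ ≤ k such that for all i ∈ [k²], y[i]·(⟨w, x_i⟩ − k/2) = 1/2. -/
/-!
Sylvester's Hadamard matrix `H` of order `k² = 4 ^ j` has `±1` entries and `H Hᵀ = k² I`, so for
every sign vector `y` the weight `w = Hᵀ y / k²` solves `H w = y`, and Cauchy–Schwarz gives
`‖w‖₁ ≤ k ‖w‖₂ = k`. Encoding each `±1` coordinate `x` by the bits `(1 + x) / 2`, `(1 - x) / 2`,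
appending a constant bit, and splitting `w` into `w⁺`, `w⁻` plus the slack `(k - ‖w‖₁) / 2` on the
constant bit turns `⟨w, x⟩ = y` into `⟨w̃, x̃⟩ = (k + y) / 2` with `w̃ ≥ 0` and `‖w̃‖₁ ≤ k`.
-/

open Finset Matrix

def sylvesterMatrix (m : ℕ) : Matrix (Fin m → Bool) (Fin m → Bool) ℝ :=
  fun a c => ∏ i, if a i && c i then -1 else 1

lemma sylvesterMatrix_eq_one_or_eq_neg_one (m : ℕ) (a c : Fin m → Bool) :
    sylvesterMatrix m a c = 1 ∨ sylvesterMatrix m a c = -1 :=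
  prod_induction _ (fun x : ℝ => x = 1 ∨ x = -1)
    (fun _ _ ha hb => by rcases ha with rfl | rfl <;> rcases hb with rfl | rfl <;> norm_num)
    (Or.inl rfl) (fun i _ => by split_ifs <;> simp)

lemma sylvesterMatrix_mul_transpose (m : ℕ) :
    sylvesterMatrix m * (sylvesterMatrix m)ᵀ = (2 ^ m : ℝ) • 1 := by
  ext a b
  have factor (i : Fin m) : ∑ t : Bool, (if a i && t then (-1 : ℝ) else 1) *
      (if b i && t then -1 else 1) = if a i = b i then 2 else 0 := by
    cases a i <;> cases b i <;> norm_num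
  simp only [mul_apply, transpose_apply, sylvesterMatrix, ← prod_mul_distrib]
  rw [← Fintype.prod_sum fun i (t : Bool) =>
    (if a i && t then (-1 : ℝ) else 1) * (if b i && t then -1 else 1),
    prod_congr rfl fun i _ => factor i]
  by_cases hab : a = b
  · simp [hab]
  · obtain ⟨i, hi⟩ := Function.ne_iff.mp hab
    simp only [Matrix.smul_apply, one_apply_ne hab, smul_zero]
    exact prod_eq_zero (mem_univ i) (if_neg hi)

lemma exists_hadamard_of_eq_two_pow {n m : ℕ} (h : n = 2 ^ m) :
    ∃ H : Matrix (Fin n) (Fin n) ℝ, (∀ i l, H i l = 1 ∨ H i l = -1) ∧ H * Hᵀ = (n : ℝ) • 1 := by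
  let e : (Fin m → Bool) ≃ Fin n := Fintype.equivFinOfCardEq (by simp [h])
  refine ⟨(sylvesterMatrix m).submatrix e.symm e.symm,
    fun i l => sylvesterMatrix_eq_one_or_eq_neg_one m _ _, ?_⟩
  rw [transpose_submatrix, submatrix_mul_equiv, sylvesterMatrix_mul_transpose]
  ext i l
  simp [one_apply, h]

section Shattering

variable {ι κ : Type*} [Fintype ι] [DecidableEq ι] [Fintype κ] [Nonempty κ]

lemma exists_mulVec_eq_of_mul_transpose_eq (H : Matrix ι κ ℝ)
    (hH : H * Hᵀ = (Fintype.card κ : ℝ) • 1) (y : ι → ℝ) (hy : ∀ i, y i = 1 ∨ y i = -1) :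
    ∃ w : κ → ℝ, H *ᵥ w = y ∧ (∑ l, |w l|) ^ 2 ≤ Fintype.card ι := by
  set c : ℝ := ↑(Fintype.card κ)
  have hc : c ≠ 0 := by positivity
  set w := c⁻¹ • (Hᵀ *ᵥ y)
  have hHw : H *ᵥ w = y := by
    rw [mulVec_smul, mulVec_mulVec, hH, smul_mulVec, one_mulVec, smul_smul, inv_mul_cancel₀ hc,
      one_smul]
  have hyy : y ⬝ᵥ y = Fintype.card ι := by
    have : ∀ i, y i * y i = 1 := fun i => by rcases hy i with h | h <;> simp [h]
    simp [dotProduct, this]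
  have hww : ∑ l, w l ^ 2 = Fintype.card ι / c := by
    calc ∑ l, w l ^ 2 = w ⬝ᵥ w := by simp [dotProduct, sq]
      _ = c⁻¹ * (y ⬝ᵥ H *ᵥ w) := by
        rw [smul_dotProduct, dotProduct_comm, dotProduct_transpose_mulVec, smul_eq_mul]
      _ = Fintype.card ι / c := by rw [hHw, hyy, inv_mul_eq_div]
  refine ⟨w, hHw, ?_⟩
  calc (∑ l, |w l|) ^ 2 ≤ c * ∑ l, |w l| ^ 2 := sq_sum_le_card_mul_sum_sq
    _ = Fintype.card ι := by simp only [sq_abs, hww]; field_simp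

end Shattering

section Lift

variable {κ : Type*}

noncomputable def binaryLift (x : κ → ℝ) : κ ⊕ κ ⊕ Unit → ℝ :=
  Sum.elim (fun l => (1 + x l) / 2) (Sum.elim (fun l => (1 - x l) / 2) fun _ => 1)

lemma binaryLift_eq_zero_or_eq_one {x : κ → ℝ} (hx : ∀ l, x l = 1 ∨ x l = -1)
    (l : κ ⊕ κ ⊕ Unit) : binaryLift x l = 0 ∨ binaryLift x l = 1 := by
  rcases l with l | l | _
  · rcases hx l with h | h <;> simp [binaryLift, h]
  · rcases hx l with h | h <;> simp [binaryLift, h]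
  · simp [binaryLift]

variable [Fintype κ]

noncomputable def nonnegLift (r : ℝ) (w : κ → ℝ) : κ ⊕ κ ⊕ Unit → ℝ :=
  Sum.elim (fun l => (w l)⁺) (Sum.elim (fun l => (w l)⁻) fun _ => (r - ∑ l, |w l|) / 2)

variable {r : ℝ} {w : κ → ℝ}

lemma nonnegLift_nonneg (hw : ∑ l, |w l| ≤ r) (l : κ ⊕ κ ⊕ Unit) : 0 ≤ nonnegLift r w l := by
  rcases l with l | l | _
  · exact posPart_nonneg _
  · exact negPart_nonneg _
  · show 0 ≤ (r - ∑ l, |w l|) / 2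
    linarith

lemma sum_abs_nonnegLift_le (hw : ∑ l, |w l| ≤ r) : ∑ l, |nonnegLift r w l| ≤ r := by
  rw [sum_congr rfl fun l _ => abs_of_nonneg (nonnegLift_nonneg hw l)]
  simp only [Fintype.sum_sum_type, nonnegLift, Sum.elim_inl, Sum.elim_inr, Fintype.sum_unique]
  rw [← add_assoc, ← sum_add_distrib]
  simp only [posPart_add_negPart]
  linarith

lemma sum_nonnegLift_mul_binaryLift (x : κ → ℝ) :
    ∑ l, nonnegLift r w l * binaryLift x l = (r + ∑ l, w l * x l) / 2 := by
  have hl (l : κ) : (w l)⁺ * ((1 + x l) / 2) + (w l)⁻ * ((1 - x l) / 2) =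
      (|w l| + w l * x l) / 2 := by
    linear_combination (1 / 2) * posPart_add_negPart (w l) + (x l / 2) * posPart_sub_negPart (w l)
  calc ∑ l, nonnegLift r w l * binaryLift x l
      = ∑ l, ((w l)⁺ * ((1 + x l) / 2) + (w l)⁻ * ((1 - x l) / 2)) + (r - ∑ l, |w l|) / 2 := by
        simp only [Fintype.sum_sum_type, nonnegLift, binaryLift, Sum.elim_inl, Sum.elim_inr,
          Fintype.sum_unique, sum_add_distrib, mul_one, add_assoc]
    _ = (r + ∑ l, w l * x l) / 2 := by
        rw [sum_congr rfl fun l _ => hl l, ← sum_div, sum_add_distrib]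
        ring

end Lift

/-- For `k` a power of two and `d = 2k²+1`, there are `k²` binary instances in `{0,1}^d`
such that every sign pattern `y ∈ {±1}^{k²}` is realized with margin exactly `1/2` around
the threshold `k/2` by some nonnegative weight vector of ℓ₁-norm at most `k`. -/
theorem stmt3 (k j : ℕ) (hk : k = 2 ^ j) :
    ∃ x : Fin (k ^ 2) → Fin (2 * k ^ 2 + 1) → ℝ,
      (∀ i l, x i l = 0 ∨ x i l = 1) ∧
      ∀ y : Fin (k ^ 2) → ℝ, (∀ i, y i = 1 ∨ y i = -1) →
        ∃ w : Fin (2 * k ^ 2 + 1) → ℝ, (∀ l, 0 ≤ w l) ∧ (∑ l, |w l|) ≤ k ∧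
          ∀ i, y i * ((∑ l, w l * x i l) - k / 2) = 1 / 2 := by
  obtain ⟨H, hH_sign, hH_orth⟩ :=
    exists_hadamard_of_eq_two_pow (n := k ^ 2) (m := 2 * j) (by rw [hk, ← pow_mul, mul_comm])
  have : NeZero (k ^ 2) := ⟨by rw [hk]; positivity⟩
  let e : Fin (k ^ 2) ⊕ Fin (k ^ 2) ⊕ Unit ≃ Fin (2 * k ^ 2 + 1) :=
    Fintype.equivOfCardEq (by simp; ring)
  refine ⟨fun i l => binaryLift (H i) (e.symm l),
    fun i l => binaryLift_eq_zero_or_eq_one (hH_sign i) _, fun y hy => ?_⟩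
  obtain ⟨w, hHw, hw_sq⟩ := exists_mulVec_eq_of_mul_transpose_eq H (by simpa using hH_orth) y hy
  have hw : ∑ l, |w l| ≤ k := by
    rw [← pow_le_pow_iff_left₀ (by positivity) (by positivity) two_ne_zero]
    simpa using hw_sq
  refine ⟨fun l => nonnegLift k w (e.symm l), fun l => nonnegLift_nonneg hw _, ?_, fun i => ?_⟩
  · rw [e.symm.sum_comp fun l => |nonnegLift k w l|]
    exact sum_abs_nonnegLift_le hw
  · rw [e.symm.sum_comp fun l => nonnegLift k w l * binaryLift (H i) l,
      sum_nonnegLift_mul_binaryLift]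
    have hwH : ∑ l, w l * H i l = y i := by
      rw [← congrFun hHw i, mulVec, dotProduct]
      simp only [mul_comm]
    rcases hy i with h | h <;> rw [hwH, h] <;> ring
end

section
/- Let z be a power of 2 and let k be a positive multiple of z, and set d = 2kz + k/z. There exists a set {x_1,...,x_{zk}} ⊆ {0,1}^d such that for every y ∈ {±1}^{zk} there exists w ∈ ℝ_+^d with ‖w‖₁ ≤ k such that for all i ∈ [zk], y[i]·(⟨w, x_i⟩ − z/2) = 1/2. -/
/-!
Let `H` be the Walsh–Hadamard matrix of order `z² = 4^j`: its entries are `±1` and its rows are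
orthogonal. Given signs `y`, the vector `v = Hᵀ y / z²` solves `H v = y` and has `‖v‖₂ = 1`,
so `‖v‖₁ ≤ z` by Cauchy–Schwarz. Encoding row `a` of `H` as the binary vector
`((1 + H a) / 2, (1 - H a) / 2, 1)` and `v` as the nonnegative weights `(v⁺, v⁻, (z - ‖v‖₁) / 2)`
gives inner products exactly `(z + y a) / 2` with `ℓ₁`-norm at most `z`. Placing `k / z` copies of
these `z²` instances on disjoint blocks of coordinates yields `zk` instances whose weights have
`ℓ₁`-norm at most `(k / z) · z = k`.
-/

open Finset

variable {ι κ : Type*}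

def ShattersWithMargin [Fintype κ] (x : ι → κ → ℝ) (t C : ℝ) : Prop :=
  ∀ y : ι → ℝ, (∀ i, y i = 1 ∨ y i = -1) →
    ∃ w : κ → ℝ, (∀ l, 0 ≤ w l) ∧ (∑ l, |w l|) ≤ C ∧
      ∀ i, y i * ((∑ l, w l * x i l) - t) = 1 / 2

theorem ShattersWithMargin.submatrix {ι' κ' : Type*} [Fintype κ] [Fintype κ'] {x : ι → κ → ℝ}
    {t C : ℝ} (hx : ShattersWithMargin x t C) (e : ι' ≃ ι) (f : κ' ≃ κ) :
    ShattersWithMargin (Matrix.submatrix x e f) t C := by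
  intro y hy
  obtain ⟨w, hw0, hwC, hwy⟩ := hx (y ∘ e.symm) fun i => hy _
  refine ⟨fun l => w (f l), fun l => hw0 _, by rwa [f.sum_comp fun l => |w l|], fun i => ?_⟩
  have := hwy (e i)
  rw [← f.sum_comp] at this
  simp only [Function.comp_apply, e.symm_apply_apply] at this
  exact this

theorem ShattersWithMargin.blockDiagonal {β : Type*} [Fintype κ] [Fintype β] [DecidableEq β]
    {x : β → ι → κ → ℝ} {t : ℝ} {C : β → ℝ} (hx : ∀ b, ShattersWithMargin (x b) t (C b)) :
    ShattersWithMargin (Matrix.blockDiagonal x) t (∑ b, C b) := by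
  intro y hy
  choose w hw0 hwC hwy using fun b => hx b (fun i => y (i, b)) fun i => hy _
  refine ⟨fun l => w l.2 l.1, fun l => hw0 _ _, ?_, fun ⟨i, b⟩ => ?_⟩
  · rw [Fintype.sum_prod_type_right]
    exact sum_le_sum fun b _ => hwC b
  · simpa only [Fintype.sum_prod_type, Matrix.blockDiagonal, Matrix.of_apply, mul_ite, mul_zero,
      sum_ite_eq, mem_univ, if_true] using hwy b i

theorem sum_sq_eq_card_of_forall_eq_one_or_neg_one [Fintype ι] {y : ι → ℝ}
    (hy : ∀ i, y i = 1 ∨ y i = -1) : ∑ i, y i ^ 2 = Fintype.card ι := by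
  have h : ∀ i, y i ^ 2 = 1 := fun i => by rcases hy i with h | h <;> simp [h]
  simp [h]

theorem exists_mul_eq_of_orthogonal_rows [Fintype ι] [Fintype κ] [Nonempty κ] {H : ι → κ → ℝ}
    (hH : ∀ a b, H a b = 1 ∨ H a b = -1)
    (horth : Pairwise fun a a' => ∑ b, H a b * H a' b = 0) (y : ι → ℝ) :
    ∃ v : κ → ℝ, (∑ b, |v b|) ^ 2 ≤ ∑ a, y a ^ 2 ∧ ∀ a, ∑ b, v b * H a b = y a := by
  classical
  set n : ℝ := (Fintype.card κ : ℝ)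
  have hn : 0 < n := by positivity
  have hrow : ∀ a a', ∑ b, H a' b * H a b = if a' = a then n else 0 := by
    intro a a'
    split_ifs with h
    · subst h
      simp [n, fun b => show H a' b * H a' b = 1 by rcases hH a' b with h | h <;> simp [h]]
    · exact horth h
  set v : κ → ℝ := fun b => (∑ a, y a * H a b) / n
  have hv : ∀ a, ∑ b, v b * H a b = y a := by
    intro a
    calc ∑ b, v b * H a b = (∑ a', y a' * ∑ b, H a' b * H a b) / n := by
          simp only [v, div_mul_eq_mul_div, ← sum_div, sum_mul, mul_sum, mul_assoc]
          rw [sum_comm]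
      _ = y a := by simp [hrow, hn.ne']
  have hsq : ∑ b, v b ^ 2 = (∑ a, y a ^ 2) / n := by
    calc ∑ b, v b ^ 2 = (∑ a, y a * ∑ b, v b * H a b) / n := by
          simp only [v, sq, mul_div_assoc', ← sum_div, mul_sum]
          rw [sum_comm]; congr 1; refine sum_congr rfl fun a _ => sum_congr rfl fun b _ => ?_
          ring
      _ = (∑ a, y a ^ 2) / n := by simp [hv, sq]
  refine ⟨v, ?_, hv⟩
  calc (∑ b, |v b|) ^ 2 ≤ n * ∑ b, |v b| ^ 2 := by
        simpa [n] using sq_sum_le_card_mul_sum_sq (s := univ) (f := fun b => |v b|)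
    _ = ∑ a, y a ^ 2 := by rw [show ∑ b, |v b| ^ 2 = ∑ b, v b ^ 2 by simp, hsq]; field_simp

noncomputable def splitInstances (H : ι → κ → ℝ) (a : ι) : κ ⊕ κ ⊕ Unit → ℝ :=
  Sum.elim (fun l => (1 + H a l) / 2) (Sum.elim (fun l => (1 - H a l) / 2) fun _ => 1)

theorem splitInstances_eq_zero_or_one {H : ι → κ → ℝ} (hH : ∀ a b, H a b = 1 ∨ H a b = -1)
    (a : ι) (l : κ ⊕ κ ⊕ Unit) : splitInstances H a l = 0 ∨ splitInstances H a l = 1 := by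
  rcases l with l | l | _
  · rcases hH a l with h | h <;> norm_num [splitInstances, h]
  · rcases hH a l with h | h <;> norm_num [splitInstances, h]
  · simp [splitInstances]

theorem shattersWithMargin_splitInstances [Fintype κ] {H : ι → κ → ℝ} {Z : ℝ}
    (hv : ∀ y : ι → ℝ, (∀ i, y i = 1 ∨ y i = -1) →
      ∃ v : κ → ℝ, ∑ b, |v b| ≤ Z ∧ ∀ a, ∑ b, v b * H a b = y a) :
    ShattersWithMargin (splitInstances H) (Z / 2) Z := by
  intro y hy
  obtain ⟨v, hvZ, hvy⟩ := hv y hy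
  set S := ∑ b, |v b|
  refine ⟨Sum.elim (fun l => (v l)⁺) (Sum.elim (fun l => (v l)⁻) fun _ => (Z - S) / 2),
    ?_, ?_, fun a => ?_⟩
  · rintro (l | l | _)
    exacts [posPart_nonneg _, negPart_nonneg _, by simp only [Sum.elim_inr]; linarith]
  · have hparts : ∑ l, |(v l)⁺| + ∑ l, |(v l)⁻| = S := by
      rw [← sum_add_distrib]
      exact sum_congr rfl fun l _ => by
        rw [abs_of_nonneg (posPart_nonneg _), abs_of_nonneg (negPart_nonneg _),
          posPart_add_negPart]
    simp only [Fintype.sum_sum_type, Sum.elim_inl, Sum.elim_inr, univ_unique, sum_singleton]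
    rw [abs_of_nonneg (by linarith : 0 ≤ (Z - S) / 2)]
    linarith
  · have hparts : ∀ l, (v l)⁺ * ((1 + H a l) / 2) + (v l)⁻ * ((1 - H a l) / 2)
        = (|v l| + v l * H a l) / 2 := fun l => by
      linear_combination (1 / 2 : ℝ) * posPart_add_negPart (v l)
        + (H a l / 2) * posPart_sub_negPart (v l)
    have hdot : ∑ l, (v l)⁺ * ((1 + H a l) / 2) + ∑ l, (v l)⁻ * ((1 - H a l) / 2)
        = (S + y a) / 2 := by
      rw [← sum_add_distrib, sum_congr rfl fun l _ => hparts l, ← sum_div, sum_add_distrib, hvy]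
    simp only [splitInstances, Fintype.sum_sum_type, Sum.elim_inl, Sum.elim_inr, univ_unique,
      sum_singleton, mul_one, ← add_assoc, hdot]
    rcases hy a with h | h <;> rw [h] <;> ring

theorem shattersWithMargin_splitInstances_of_orthogonal [Fintype ι] [Fintype κ] [Nonempty κ]
    {H : ι → κ → ℝ} (hH : ∀ a b, H a b = 1 ∨ H a b = -1)
    (horth : Pairwise fun a a' => ∑ b, H a b * H a' b = 0) {Z : ℝ} (hZ : 0 ≤ Z)
    (hcard : (Fintype.card ι : ℝ) ≤ Z ^ 2) :
    ShattersWithMargin (splitInstances H) (Z / 2) Z := by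
  refine shattersWithMargin_splitInstances fun y hy => ?_
  obtain ⟨v, hvnorm, hvy⟩ := exists_mul_eq_of_orthogonal_rows hH horth y
  refine ⟨v, abs_le_of_sq_le_sq' ?_ hZ |>.2, hvy⟩
  rw [sum_sq_eq_card_of_forall_eq_one_or_neg_one hy] at hvnorm
  exact hvnorm.trans hcard

noncomputable def walsh {σ : Type*} [Fintype σ] (a b : σ → Bool) : ℝ :=
  ∏ i, if a i && b i then -1 else 1

theorem walsh_eq_one_or_neg_one {σ : Type*} [Fintype σ] (a b : σ → Bool) :
    walsh a b = 1 ∨ walsh a b = -1 := by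
  refine prod_induction _ (fun r => r = 1 ∨ r = -1) ?_ (Or.inl rfl) fun i _ => ?_
  · rintro _ _ (rfl | rfl) (rfl | rfl) <;> norm_num
  · split_ifs <;> simp

theorem walsh_orthogonal {σ : Type*} [Fintype σ] [DecidableEq σ] :
    Pairwise fun a a' : σ → Bool => ∑ b, walsh a b * walsh a' b = 0 := by
  intro a a' hne
  obtain ⟨i, hi⟩ := Function.ne_iff.mp hne
  let χ : Bool → Bool → ℝ := fun p r => if p && r then -1 else 1
  calc ∑ b, walsh a b * walsh a' b = ∑ b : σ → Bool, ∏ i, χ (a i) (b i) * χ (a' i) (b i) := by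
        simp only [walsh, χ, prod_mul_distrib]
    _ = ∏ i, ∑ r, χ (a i) r * χ (a' i) r := by
        rw [prod_univ_sum, Fintype.piFinset_univ]
    _ = 0 := prod_eq_zero (mem_univ i) (by
        revert hi; cases a i <;> cases a' i <;> simp [χ])

theorem stmt4_general (z j k : ℕ) (hz : z = 2 ^ j) (hdvd : z ∣ k) :
    ∃ x : Fin (z * k) → Fin (2 * k * z + k / z) → ℝ,
      (∀ i l, x i l = 0 ∨ x i l = 1) ∧
      ∀ y : Fin (z * k) → ℝ, (∀ i, y i = 1 ∨ y i = -1) →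
        ∃ w : Fin (2 * k * z + k / z) → ℝ, (∀ l, 0 ≤ w l) ∧ (∑ l, |w l|) ≤ k ∧
          ∀ i, y i * ((∑ l, w l * x i l) - z / 2) = 1 / 2 := by
  obtain ⟨B, rfl⟩ := hdvd
  subst hz
  let σ := Fin (2 * j) → Bool
  have hblock : ShattersWithMargin (splitInstances (walsh : σ → σ → ℝ))
      (((2 ^ j : ℕ) : ℝ) / 2) ((2 ^ j : ℕ) : ℝ) :=
    shattersWithMargin_splitInstances_of_orthogonal walsh_eq_one_or_neg_one walsh_orthogonal
      (by positivity) (by simp [pow_mul'])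
  have hinst : Fintype.card (Fin (2 ^ j * (2 ^ j * B))) = Fintype.card (σ × Fin B) := by
    simp only [Fintype.card_fin, Fintype.card_prod, Fintype.card_pi, Fintype.card_bool, prod_const,
      card_univ, pow_mul', σ]
    ring
  have hdim : Fintype.card (Fin (2 * (2 ^ j * B) * 2 ^ j + 2 ^ j * B / 2 ^ j))
      = Fintype.card ((σ ⊕ σ ⊕ Unit) × Fin B) := by
    simp only [Fintype.card_fin, Fintype.card_prod, Fintype.card_sum, Fintype.card_unique,
      Fintype.card_pi, Fintype.card_bool, prod_const, card_univ, pow_mul', σ,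
      Nat.mul_div_cancel_left B (Nat.two_pow_pos j)]
    ring
  let e := Fintype.equivOfCardEq hinst
  let f := Fintype.equivOfCardEq hdim
  refine ⟨(Matrix.blockDiagonal fun _ : Fin B => splitInstances walsh).submatrix e f,
    fun i l => ?_, ?_⟩
  · simp only [Matrix.submatrix_apply, Matrix.blockDiagonal, Matrix.of_apply]
    split_ifs
    exacts [splitInstances_eq_zero_or_one walsh_eq_one_or_neg_one _ _, Or.inl rfl]
  · have h := ShattersWithMargin.submatrix
      (ShattersWithMargin.blockDiagonal fun _ : Fin B => hblock) e f
    have hnorm : ∑ _b : Fin B, ((2 ^ j : ℕ) : ℝ) = ((2 ^ j * B : ℕ) : ℝ) := by simp [mul_comm]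
    rwa [hnorm] at h

/-- For `z` a power of two dividing `k > 0` and `d = 2kz + k/z`, there are `zk` binary
instances in `{0,1}^d` such that every sign pattern `y ∈ {±1}^{zk}` is realized with margin
exactly `1/2` around the threshold `z/2` by some nonnegative weight vector of
ℓ₁-norm at most `k`. -/
theorem stmt4 (z j k : ℕ) (hz : z = 2 ^ j) (hdvd : z ∣ k) (hk : 0 < k) :
    ∃ x : Fin (z * k) → Fin (2 * k * z + k / z) → ℝ,
      (∀ i l, x i l = 0 ∨ x i l = 1) ∧
      ∀ y : Fin (z * k) → ℝ, (∀ i, y i = 1 ∨ y i = -1) →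
        ∃ w : Fin (2 * k * z + k / z) → ℝ, (∀ l, 0 ≤ w l) ∧ (∑ l, |w l|) ≤ k ∧
          ∀ i, y i * ((∑ l, w l * x i l) - z / 2) = 1 / 2 :=
  stmt4_general z j k hz hdvd
end

section
/- Let X be a random vector in [0,1]^d and let x_1,...,x_n be i.i.d. copies of X. For any δ ∈ (0,1), with probability at least 1−δ, for every w ∈ ℝ_+^d with ‖w‖₁ ≤ k: E[⟨w,X⟩] ≤ 2·(1/n)∑_{i=1}^n ⟨w,x_i⟩ + 16k·ln(d/δ)/n. -/
/-!
Multiplicative Chernoff bound for the lower tail, taken at the exponent `-1`: on `[0, 1]`,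
`exp (-y) ≤ 1 - y / 2`, so `E[exp (-Y)] ≤ 1 - E[Y] / 2 ≤ exp (-E[Y] / 2)` and a sum of `n`
i.i.d. copies of `Y` falls below `n E[Y] / 2 - t` with probability at most `exp (-t)`.
With `t = log (d / δ)` and a union bound over the `d` coordinates, every coordinate mean
satisfies `α_j ≤ 2 α̂_j + 2 log (d / δ) / n`; averaging with the weights `w ≥ 0` gives the claim.
-/

open MeasureTheory ProbabilityTheory Real

lemma exp_neg_le_one_sub_half {x : ℝ} (hx₀ : 0 ≤ x) (hx₁ : x ≤ 1) : exp (-x) ≤ 1 - x / 2 := by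
  have h := add_one_le_exp x
  have : exp (-x) * exp x = 1 := by rw [← exp_add, neg_add_cancel, exp_zero]
  nlinarith [exp_pos (-x)]

section

variable {Ω : Type*} [MeasurableSpace Ω] {μ : Measure Ω} [IsProbabilityMeasure μ] {X : Ω → ℝ}

lemma mgf_neg_one_le_of_mem_Icc (hX : AEMeasurable X μ) (hb : ∀ᵐ ω ∂μ, X ω ∈ Set.Icc (0 : ℝ) 1) :
    mgf X μ (-1) ≤ exp (-μ[X] / 2) := by
  have hXint : Integrable X μ := .of_mem_Icc 0 1 hX hb
  calc mgf X μ (-1) ≤ ∫ ω, (1 - X ω / 2) ∂μ := by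
        refine integral_mono_ae (integrable_exp_mul_of_mem_Icc hX hb)
          ((integrable_const 1).sub (hXint.div_const 2)) ?_
        filter_upwards [hb] with ω hω
        simpa using exp_neg_le_one_sub_half hω.1 hω.2
    _ = 1 - μ[X] / 2 := by
        rw [integral_sub (integrable_const 1) (hXint.div_const 2), integral_div]; simp
    _ ≤ exp (-μ[X] / 2) := by linarith [add_one_le_exp (-μ[X] / 2)]

lemma measureReal_pi_sum_le_half_mean_sub_le_exp_neg {f : Ω → ℝ} (hf : Measurable f)
    (hb : ∀ᵐ ω ∂μ, f ω ∈ Set.Icc (0 : ℝ) 1) (n : ℕ) (t : ℝ) :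
    (Measure.pi fun _ : Fin n => μ).real {s | ∑ i, f (s i) ≤ n * μ[f] / 2 - t} ≤ exp (-t) := by
  set P := Measure.pi fun _ : Fin n => μ
  set Y : Fin n → (Fin n → Ω) → ℝ := fun i s => f (s i)
  have hY : ∀ i, Measurable (Y i) := fun i => hf.comp (measurable_pi_apply i)
  have hbY : ∀ i, ∀ᵐ s ∂P, Y i s ∈ Set.Icc (0 : ℝ) 1 := fun i =>
    (measurePreserving_eval (fun _ => μ) i).quasiMeasurePreserving.ae hb
  have hindep : iIndepFun Y P := iIndepFun_pi fun _ => hf.aemeasurable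
  have hmgf : ∀ i, mgf (Y i) P (-1) = mgf f μ (-1) := fun i => by
    have h := mgf_map (μ := P) (measurable_pi_apply i).aemeasurable (X := f) (t := -1)
      (hf.const_mul (-1)).exp.aestronglyMeasurable
    rwa [(measurePreserving_eval _ i).map_eq, eq_comm] at h
  have hsum :
      {s | ∑ i, f (s i) ≤ n * μ[f] / 2 - t} = {s | (∑ i, Y i) s ≤ n * μ[f] / 2 - t} := by
    simp only [Finset.sum_apply, Y]
  calc P.real {s | ∑ i, f (s i) ≤ n * μ[f] / 2 - t}
      ≤ exp (-(-1) * (n * μ[f] / 2 - t)) * mgf (∑ i, Y i) P (-1) := by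
        rw [hsum]
        exact measure_le_le_exp_mul_mgf _ (by norm_num) (hindep.integrable_exp_mul_sum hY
          fun i _ => integrable_exp_mul_of_mem_Icc (hY i).aemeasurable (hbY i))
    _ ≤ exp (n * μ[f] / 2 - t) * exp (-μ[f] / 2) ^ n := by
        rw [hindep.mgf_sum hY, Finset.prod_congr rfl fun i _ => hmgf i, Finset.prod_const,
          Finset.card_univ, Fintype.card_fin, neg_neg, one_mul]
        gcongr
        · exact mgf_nonneg
        · exact mgf_neg_one_le_of_mem_Icc hf.aemeasurable hb
    _ = exp (-t) := by rw [← exp_nat_mul, ← exp_add]; ring_nf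

lemma ofReal_one_sub_le_of_measureReal_le_of_compl_subset {P : Measure Ω}
    [IsProbabilityMeasure P] {B G : Set Ω} {δ : ℝ} (hB : P.real B ≤ δ) (hG : Bᶜ ⊆ G) :
    ENNReal.ofReal (1 - δ) ≤ P G := by
  rw [ENNReal.ofReal_le_iff_le_toReal (measure_ne_top _ _), ← measureReal_def]
  have hcover : Set.univ ⊆ B ∪ G := fun ω _ => (em (ω ∈ B)).imp_right (hG ·)
  calc 1 - δ ≤ P.real Set.univ - P.real B := by rw [probReal_univ]; linarith
    _ ≤ P.real G := by
      linarith [measureReal_mono hcover (measure_ne_top P _), measureReal_union_le (μ := P) B G]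

end

lemma integral_sum_mul_le_of_forall_le_sum {d n : ℕ} (hn : 0 < n) {μ : Measure (Fin d → ℝ)}
    (hint : ∀ j, Integrable (fun x => x j) μ) {s : Fin n → Fin d → ℝ} {c : ℝ}
    (hs : ∀ j, n * (∫ x, x j ∂μ) / 2 - c ≤ ∑ i, s i j) {w : Fin d → ℝ} (hw : ∀ l, 0 ≤ w l) :
    ∫ x, ∑ l, w l * x l ∂μ ≤ 2 * ((∑ i, ∑ l, w l * s i l) / n) + 2 * (∑ l, w l) * c / n := by
  have hn' : (0 : ℝ) < n := Nat.cast_pos.mpr hn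
  have hmean : ∀ j, ∫ x, x j ∂μ ≤ (2 * ∑ i, s i j + 2 * c) / n := fun j => by
    rw [le_div_iff₀ hn']; linarith [hs j]
  rw [integral_finsetSum _ fun l _ => (hint l).const_mul (w l)]
  calc ∑ l, ∫ x, w l * x l ∂μ = ∑ l, w l * ∫ x, x l ∂μ := by simp only [integral_const_mul]
    _ ≤ ∑ l, w l * ((2 * ∑ i, s i l + 2 * c) / n) := by gcongr with l; exacts [hw l, hmean l]
    _ = ∑ l, (2 * ∑ i, w l * s i l + 2 * w l * c) / n :=
      Finset.sum_congr rfl fun l _ => by rw [← Finset.mul_sum]; ring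
    _ = _ := by
      rw [← Finset.sum_div, Finset.sum_add_distrib, ← Finset.mul_sum, ← Finset.sum_mul,
        ← Finset.mul_sum, Finset.sum_comm]
      ring

theorem stmt6_general (d n : ℕ) (hn : 0 < n) (k : ℝ)
    (μ : Measure (Fin d → ℝ)) [IsProbabilityMeasure μ]
    (hsupp : ∀ᵐ x ∂μ, ∀ l, x l ∈ Set.Icc (0 : ℝ) 1)
    (δ : ℝ) (hδ : δ ∈ Set.Ioo (0 : ℝ) 1) :
    ENNReal.ofReal (1 - δ) ≤ (Measure.pi fun _ : Fin n => μ)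
      {s | ∀ w : Fin d → ℝ, (∀ l, 0 ≤ w l) → (∑ l, |w l|) ≤ k →
        ∫ x, (∑ l, w l * x l) ∂μ ≤
          2 * ((∑ i, ∑ l, w l * s i l) / n) + 16 * k * Real.log (d / δ) / n} := by
  obtain rfl | hd := d.eq_zero_or_pos
  · simpa using hδ.1.le
  have hd' : (0 : ℝ) < d := Nat.cast_pos.mpr hd
  set t := Real.log (d / δ)
  have ht : 0 ≤ t := Real.log_nonneg <| (one_le_div hδ.1).mpr <| by
    linarith [hδ.2, (Nat.one_le_cast (α := ℝ)).mpr hd]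
  have hcoord : ∀ j, ∀ᵐ x ∂μ, x j ∈ Set.Icc (0 : ℝ) 1 := fun j => hsupp.mono fun x hx => hx j
  set E : Fin d → Set (Fin n → Fin d → ℝ) :=
    fun j => {s | ∑ i, s i j ≤ n * (∫ x, x j ∂μ) / 2 - t}
  have hE : ∀ j, (Measure.pi fun _ : Fin n => μ).real (E j) ≤ δ / d := fun j =>
    (measureReal_pi_sum_le_half_mean_sub_le_exp_neg (measurable_pi_apply j) (hcoord j) n t).trans_eq
      <| by rw [exp_neg, exp_log (div_pos hd' hδ.1), inv_div]
  have hbad : (Measure.pi fun _ : Fin n => μ).real (⋃ j, E j) ≤ δ := calc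
    _ ≤ ∑ j, (Measure.pi fun _ : Fin n => μ).real (E j) := measureReal_iUnion_fintype_le E
    _ ≤ ∑ _j : Fin d, δ / d := Finset.sum_le_sum fun j _ => hE j
    _ = δ := by simp [mul_div_cancel₀ _ hd'.ne']
  refine ofReal_one_sub_le_of_measureReal_le_of_compl_subset hbad fun s hs w hw hwk => ?_
  simp only [Set.mem_compl_iff, Set.mem_iUnion, not_exists, E, Set.mem_ofPred_eq, not_le] at hs
  have hwk' : ∑ l, w l ≤ k := by simpa only [abs_of_nonneg (hw _)] using hwk
  calc ∫ x, ∑ l, w l * x l ∂μ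
      ≤ 2 * ((∑ i, ∑ l, w l * s i l) / n) + 2 * (∑ l, w l) * t / n :=
        integral_sum_mul_le_of_forall_le_sum hn
          (fun j => .of_mem_Icc 0 1 (measurable_pi_apply j).aemeasurable (hcoord j))
          (fun j => (hs j).le) hw
    _ ≤ 2 * ((∑ i, ∑ l, w l * s i l) / n) + 16 * k * t / n := by
        gcongr
        · exact Finset.sum_nonneg fun l _ => hw l
        · norm_num

/-- With probability at least `1-δ` over an i.i.d. sample of size `n` from a distribution
on `[0,1]^d`, simultaneously for all nonnegative `w` with `‖w‖₁ ≤ k`: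
`E[⟨w,X⟩] ≤ 2·(empirical mean of ⟨w,x_i⟩) + 16k·ln(d/δ)/n`. -/
theorem stmt6 (d n : ℕ) (hn : 0 < n) (k : ℝ) (hk : 0 ≤ k)
    (μ : Measure (Fin d → ℝ)) [IsProbabilityMeasure μ]
    (hsupp : ∀ᵐ x ∂μ, ∀ l, x l ∈ Set.Icc (0 : ℝ) 1)
    (δ : ℝ) (hδ : δ ∈ Set.Ioo (0 : ℝ) 1) :
    ENNReal.ofReal (1 - δ) ≤ (Measure.pi fun _ : Fin n => μ)
      {s | ∀ w : Fin d → ℝ, (∀ l, 0 ≤ w l) → (∑ l, |w l|) ≤ k →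
        ∫ x, (∑ l, w l * x l) ∂μ ≤
          2 * ((∑ i, ∑ l, w l * s i l) / n) + 16 * k * Real.log (d / δ) / n} :=
  stmt6_general d n hn k μ hsupp δ hδ
end

section
/- Consider the unnormalized exponentiated gradient update w_{t+1}[i] = w_t[i]·exp(−η z_t[i]) started from w_1 = (λ,...,λ) ∈ ℝ^d with η, λ > 0. If η·z_t[i] ≥ −1 for all t ∈ [T] and i ∈ [d], then for all u ∈ ℝ_+^d: ∑_{t=1}^T ⟨w_t − u, z_t⟩ ≤ (dλ + ∑_{i=1}^d u[i]·ln(u[i]/(e·λ)))/η + η·∑_{t=1}^T ∑_{i=1}^d w_t[i]·z_t[i]². -/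
lemma exp_le_one_add_add_sq {x : ℝ} (hx : x ≤ 1) : Real.exp x ≤ 1 + x + x ^ 2 := by
  rcases le_or_gt (-1) x with h | h
  · have habs : |x| ≤ 1 := abs_le.mpr ⟨h, hx⟩
    have hb := Real.exp_bound habs (n := 2) (by norm_num)
    have hsum : ∑ i ∈ Finset.range 2, x ^ i / (Nat.factorial i) = 1 + x := by
      simp [Finset.sum_range_succ]
    rw [hsum] at hb
    have habs2 := abs_le.mp hb
    have hx2 : |x| ^ 2 = x ^ 2 := sq_abs x
    norm_num [Nat.factorial] at habs2
    nlinarith [sq_nonneg x, habs2.2]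
  · have h1 : Real.exp x < 1 := by
      have := Real.exp_lt_exp.mpr (show x < 0 by linarith)
      simpa using this
    nlinarith [sq_nonneg x]

lemma alog_le {a x : ℝ} (ha : 0 ≤ a) (hx : 0 < x) :
    a * Real.log x - x ≤ a * Real.log a - a := by
  rcases eq_or_lt_of_le ha with h | ha'
  · simp [← h]; linarith
  · have h1 : Real.log (x / a) ≤ x / a - 1 := Real.log_le_sub_one_of_pos (by positivity)
    rw [Real.log_div hx.ne' ha'.ne'] at h1
    have h2 := mul_le_mul_of_nonneg_left h1 ha
    rw [mul_sub, mul_sub, mul_div_cancel₀ _ ha'.ne'] at h2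
    linarith

lemma telescope' (f : ℕ → ℝ) (T : ℕ) :
    ∑ t ∈ Finset.Icc 1 T, (f (t + 1) - f t) = f (T + 1) - f 1 := by
  induction T with
  | zero => simp
  | succ n ih =>
    rw [Finset.sum_Icc_succ_top (by omega), ih]; ring

lemma telescope (f : ℕ → ℝ) (T : ℕ) :
    ∑ t ∈ Finset.Icc 1 T, (f t - f (t + 1)) = f 1 - f (T + 1) := by
  induction T with
  | zero => simp
  | succ n ih =>
    rw [Finset.sum_Icc_succ_top (by omega), ih]; ring

/-- Local-norm regret bound for unnormalized exponentiated gradient: starting from the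
constant vector `λ` and updating `w_{t+1}[i] = w_t[i]·exp(−η z_t[i])`, if `η z_t[i] ≥ −1`
throughout, then for every nonnegative comparator `u`,
`∑_t ⟨w_t − u, z_t⟩ ≤ (dλ + ∑_i u[i] ln(u[i]/(eλ)))/η + η ∑_t ∑_i w_t[i] z_t[i]²`. -/
theorem stmt7 (d T : ℕ) (η lam : ℝ) (hη : 0 < η) (hlam : 0 < lam)
    (z w : ℕ → Fin d → ℝ)
    (hinit : ∀ i, w 1 i = lam)
    (hrec : ∀ t i, w (t + 1) i = w t i * Real.exp (-η * z t i))
    (hz : ∀ t ∈ Finset.Icc 1 T, ∀ i, -1 ≤ η * z t i)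
    (u : Fin d → ℝ) (hu : ∀ i, 0 ≤ u i) :
    ∑ t ∈ Finset.Icc 1 T, ∑ i, (w t i - u i) * z t i ≤
      ((d : ℝ) * lam + ∑ i, u i * Real.log (u i / (Real.exp 1 * lam))) / η +
        η * ∑ t ∈ Finset.Icc 1 T, ∑ i, w t i * z t i ^ 2 := by
  have hpos : ∀ t, 1 ≤ t → ∀ i, 0 < w t i := by
    intro t ht
    induction t, ht using Nat.le_induction with
    | base => intro i; rw [hinit]; exact hlam
    | succ n hn ih => intro i; rw [hrec]; exact mul_pos (ih i) (Real.exp_pos _)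
  have step : ∀ t ∈ Finset.Icc 1 T, ∀ i : Fin d,
      η * ((w t i - u i) * z t i) ≤
        ((w t i - w (t + 1) i) + u i * (Real.log (w (t + 1) i) - Real.log (w t i)))
          + η ^ 2 * (w t i * z t i ^ 2) := by
    intro t ht i
    have ht1 : 1 ≤ t := (Finset.mem_Icc.mp ht).1
    have hw := hpos t ht1 i
    have hlog : Real.log (w (t + 1) i) = Real.log (w t i) + (-η * z t i) := by
      rw [hrec, Real.log_mul hw.ne' (Real.exp_ne_zero _), Real.log_exp]
    have hexp : Real.exp (-η * z t i) ≤ 1 + (-η * z t i) + (-η * z t i) ^ 2 :=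
      exp_le_one_add_add_sq (by nlinarith [hz t ht i])
    have hrec' : w (t + 1) i ≤ w t i * (1 + (-η * z t i) + (-η * z t i) ^ 2) := by
      rw [hrec]; exact mul_le_mul_of_nonneg_left hexp hw.le
    rw [hlog]
    nlinarith [hrec']
  have H : η * ∑ t ∈ Finset.Icc 1 T, ∑ i, (w t i - u i) * z t i ≤
      ((d : ℝ) * lam + ∑ i, u i * Real.log (u i / (Real.exp 1 * lam)))
        + η ^ 2 * ∑ t ∈ Finset.Icc 1 T, ∑ i, w t i * z t i ^ 2 := by
    have h1 : η * ∑ t ∈ Finset.Icc 1 T, ∑ i, (w t i - u i) * z t i ≤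
        ∑ t ∈ Finset.Icc 1 T, ∑ i,
          (((w t i - w (t + 1) i) + u i * (Real.log (w (t + 1) i) - Real.log (w t i)))
            + η ^ 2 * (w t i * z t i ^ 2)) := by
      rw [Finset.mul_sum]
      refine Finset.sum_le_sum fun t ht => ?_
      rw [Finset.mul_sum]
      exact Finset.sum_le_sum fun i _ => step t ht i
    refine h1.trans ?_
    have hsplit : ∑ t ∈ Finset.Icc 1 T, ∑ i : Fin d,
          (((w t i - w (t + 1) i) + u i * (Real.log (w (t + 1) i) - Real.log (w t i)))
            + η ^ 2 * (w t i * z t i ^ 2)) =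
        (∑ i : Fin d, ((lam - w (T + 1) i) +
            u i * (Real.log (w (T + 1) i) - Real.log lam)))
          + η ^ 2 * ∑ t ∈ Finset.Icc 1 T, ∑ i, w t i * z t i ^ 2 := by
      have e1 : ∑ t ∈ Finset.Icc 1 T, ∑ i : Fin d,
          (((w t i - w (t + 1) i) + u i * (Real.log (w (t + 1) i) - Real.log (w t i)))
            + η ^ 2 * (w t i * z t i ^ 2)) =
          (∑ t ∈ Finset.Icc 1 T, ∑ i : Fin d,
            ((w t i - w (t + 1) i) + u i * (Real.log (w (t + 1) i) - Real.log (w t i))))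
          + ∑ t ∈ Finset.Icc 1 T, ∑ i : Fin d, η ^ 2 * (w t i * z t i ^ 2) := by
        rw [← Finset.sum_add_distrib]
        exact Finset.sum_congr rfl fun t _ => by rw [← Finset.sum_add_distrib]
      rw [e1]
      congr 1
      · rw [Finset.sum_comm]
        refine Finset.sum_congr rfl fun i _ => ?_
        have t1 := telescope (fun t => w t i) T
        have t2 := telescope' (fun t => Real.log (w t i)) T
        rw [Finset.sum_add_distrib, t1, ← Finset.mul_sum, t2, hinit]
      · rw [Finset.mul_sum]
        exact Finset.sum_congr rfl fun t _ => by rw [Finset.mul_sum]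
    rw [hsplit]
    gcongr ?_ + _
    have hfin : ∀ i : Fin d, (lam - w (T + 1) i) +
        u i * (Real.log (w (T + 1) i) - Real.log lam) ≤
        lam + u i * Real.log (u i / (Real.exp 1 * lam)) := by
      intro i
      have hW := hpos (T + 1) (by omega) i
      have key := alog_le (hu i) hW
      rcases eq_or_lt_of_le (hu i) with h0 | h0
      · simp [← h0]; linarith
      · have : Real.log (u i / (Real.exp 1 * lam)) =
            Real.log (u i) - 1 - Real.log lam := by
          rw [Real.log_div h0.ne' (by positivity), Real.log_mul (Real.exp_ne_zero 1)
            hlam.ne', Real.log_exp]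
          ring
        rw [this]
        nlinarith [key]
    calc ∑ i : Fin d, ((lam - w (T + 1) i) +
            u i * (Real.log (w (T + 1) i) - Real.log lam))
        ≤ ∑ i : Fin d, (lam + u i * Real.log (u i / (Real.exp 1 * lam))) :=
          Finset.sum_le_sum fun i _ => hfin i
      _ = (d : ℝ) * lam + ∑ i, u i * Real.log (u i / (Real.exp 1 * lam)) := by
          rw [Finset.sum_add_distrib, Finset.sum_const, Finset.card_univ,
            Fintype.card_fin, nsmul_eq_mul]
  rw [div_add' _ _ _ hη.ne', le_div_iff₀ hη]
  nlinarith [H]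
end

section
/- Let ℓ(x,y,w) = [1/2 − y(⟨w,x⟩ − θ)]₊ with θ ∈ [0,k] and r = θ + 1/2. Fix w ∈ ℝ_+^d, x ∈ [0,1]^d, y ∈ {±1}, and let z be any subgradient of w ↦ ℓ(x,y,w) at w. Then ∑_{i=1}^d w[i]·z[i]² ≤ ℓ(x,y,w) + r. -/
/-- For the Winnow loss `ℓ(x,y,w) = [1/2 − y(⟨w,x⟩ − θ)]₊` with `θ ∈ [0,k]` and
`r = θ + 1/2`, any subgradient `z` of `w ↦ ℓ(x,y,w)` at a nonnegative `w` (for `x ∈ [0,1]^d`,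
`y ∈ {±1}`) satisfies `∑_i w[i] z[i]² ≤ ℓ(x,y,w) + r`. -/
theorem stmt9 (d : ℕ) (k θ : ℝ) (hθ : θ ∈ Set.Icc (0 : ℝ) k) (r : ℝ) (hr : r = θ + 1 / 2)
    (w x : Fin d → ℝ) (hw : ∀ i, 0 ≤ w i) (hx : ∀ i, x i ∈ Set.Icc (0 : ℝ) 1)
    (y : ℝ) (hy : y = 1 ∨ y = -1)
    (z : Fin d → ℝ)
    (hz : ∀ v : Fin d → ℝ,
      max 0 (1 / 2 - y * ((∑ i, w i * x i) - θ)) + ∑ i, z i * (v i - w i) ≤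
        max 0 (1 / 2 - y * ((∑ i, v i * x i) - θ))) :
    ∑ i, w i * z i ^ 2 ≤ max 0 (1 / 2 - y * ((∑ i, w i * x i) - θ)) + r := by
  obtain ⟨hθ0, _⟩ := hθ
  set S := ∑ i, w i * x i with hS
  set c := 1 / 2 - y * (S - θ) with hc
  have hyabs : |y| = 1 := by rcases hy with h | h <;> simp [h]
  -- key perturbation inequality
  have key : ∀ (i : Fin d) (t : ℝ),
      max 0 c + z i * t ≤ max 0 (c - y * t * x i) := by
    intro i t
    have h := hz (Function.update w i (w i + t))
    have h1 : ∑ j, z j * (Function.update w i (w i + t) j - w j) = z i * t := by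
      rw [Finset.sum_eq_single i]
      · simp
      · intro j _ hj; simp [Function.update_apply, hj]
      · simp
    have h2 : ∑ j, Function.update w i (w i + t) j * x j = S + t * x i := by
      have e : ∀ j, Function.update w i (w i + t) j * x j
          = w j * x j + (if j = i then t * x i else 0) := by
        intro j
        by_cases hj : j = i
        · subst hj; simp [Function.update_apply]; ring
        · simp [Function.update_apply, hj]
      rw [Finset.sum_congr rfl fun j _ => e j, Finset.sum_add_distrib]
      simp [hS]
    rw [h1, h2] at h
    have : 1 / 2 - y * (S + t * x i - θ) = c - y * t * x i := by rw [hc]; ring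
    rw [this] at h
    exact h
  have hx0 : ∀ i, 0 ≤ x i := fun i => (hx i).1
  have hx1 : ∀ i, x i ≤ 1 := fun i => (hx i).2
  -- |z i| ≤ x i
  have hzb : ∀ i, |z i| ≤ x i := by
    intro i
    rw [abs_le]
    have hb : ∀ t : ℝ, max 0 (c - y * t * x i) ≤ max 0 c + |t| * x i := by
      intro t
      have h1 : |y * t * x i| ≤ |t| * x i := by
        rw [abs_mul, abs_mul, hyabs, one_mul, abs_of_nonneg (hx0 i)]
      have h2 : c - y * t * x i ≤ max 0 c + |t| * x i := by
        have := le_max_right (0 : ℝ) c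
        have := neg_abs_le (y * t * x i)
        linarith
      have h3 : (0 : ℝ) ≤ max 0 c + |t| * x i := by
        have := le_max_left (0 : ℝ) c
        have : 0 ≤ |t| * x i := mul_nonneg (abs_nonneg t) (hx0 i)
        positivity
      exact max_le h3 h2
    constructor
    · have h := (key i (-1)).trans (hb (-1))
      simp at h; linarith
    · have h := (key i 1).trans (hb 1)
      simp at h; linarith
  by_cases hcneg : c < 0
  · -- hinge inactive: z = 0
    have hmax : max 0 c = 0 := max_eq_left hcneg.le
    have hz0 : ∀ i, z i = 0 := by
      intro i
      have hb : ∀ t : ℝ, |t| ≤ -c → max 0 (c - y * t * x i) = 0 := by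
        intro t ht
        apply max_eq_left
        have h1 : |y * t * x i| ≤ -c := by
          rw [abs_mul, abs_mul, hyabs, one_mul, abs_of_nonneg (hx0 i)]
          calc |t| * x i ≤ |t| * 1 := by
                exact mul_le_mul_of_nonneg_left (hx1 i) (abs_nonneg t)
          _ ≤ -c := by rwa [mul_one]
        have := neg_abs_le (y * t * x i)
        linarith
      have hp := key i (-c)
      rw [hmax, hb (-c) (by rw [abs_of_nonneg (by linarith)]), zero_add] at hp
      have hn := key i c
      rw [hmax, hb c (by rw [abs_of_nonpos hcneg.le]), zero_add] at hn
      -- z i * (-c) ≤ 0 and z i * c ≤ 0, with c < 0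
      nlinarith
    have : ∑ i, w i * z i ^ 2 = 0 := by
      apply Finset.sum_eq_zero; intro i _; rw [hz0 i]; ring
    rw [this, hmax, hr]
    linarith
  · push_neg at hcneg
    have hmax : max 0 c = c := max_eq_right hcneg
    have hsum : ∑ i, w i * z i ^ 2 ≤ S := by
      rw [hS]
      apply Finset.sum_le_sum
      intro i _
      apply mul_le_mul_of_nonneg_left _ (hw i)
      calc z i ^ 2 = |z i| ^ 2 := (sq_abs _).symm
        _ ≤ x i ^ 2 := by
            apply pow_le_pow_left₀ (abs_nonneg _) (hzb i)
        _ ≤ x i := by nlinarith [hx0 i, hx1 i]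
    rw [hmax, hr, hc]
    rw [hc] at hcneg
    rcases hy with h | h <;> rw [h] at hcneg ⊢ <;> linarith
end

section
/- If ε_1,...,ε_n are i.i.d. uniform ±1 random variables, then E[|∑_{i=1}^n ε_i|] ≥ sqrt(n/2). -/
/-!
Writing `k` for the number of `+1` signs, `E|S_n| = 2⁻ⁿ ∑ₖ C(n,k) |n - 2k|`. The partial sums
of `C(n,k) (n - 2k)` telescope, `∑_{k ≤ j} C(n,k) (n - 2k) = n C(n-1,j)`, and the full sum
vanishes, so the absolute sum is at least twice any partial sum. With `j = ⌊(n-1)/2⌋` the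
claim reduces to the central binomial estimate `16^m ≤ 4m C(2m,m)²`, which follows by induction
from `C(2m+2,m+1) = 2(2m+1)/(m+1) · C(2m,m)` and `4m(m+1) ≤ (2m+1)²`.
-/

open MeasureTheory Finset

theorem Nat.sixteen_pow_le_four_mul_mul_centralBinom_sq {m : ℕ} (hm : 0 < m) :
    16 ^ m ≤ 4 * m * m.centralBinom ^ 2 := by
  induction m, hm using Nat.le_induction with
  | base => decide
  | succ m hm ih =>
    refine Nat.le_of_mul_le_mul_left ?_ (show 0 < (m + 1) ^ 2 by positivity)
    calc (m + 1) ^ 2 * 16 ^ (m + 1) = 16 * (m + 1) ^ 2 * 16 ^ m := by ring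
      _ ≤ 16 * (m + 1) ^ 2 * (4 * m * m.centralBinom ^ 2) := by gcongr
      _ = 4 * m * (m + 1) * (16 * (m + 1) * m.centralBinom ^ 2) := by ring
      _ ≤ (2 * m + 1) ^ 2 * (16 * (m + 1) * m.centralBinom ^ 2) := by gcongr; nlinarith
      _ = 4 * (m + 1) * (2 * (2 * m + 1) * m.centralBinom) ^ 2 := by ring
      _ = (m + 1) ^ 2 * (4 * (m + 1) * (m + 1).centralBinom ^ 2) := by
        rw [← Nat.succ_mul_centralBinom_succ]; ring

theorem Nat.four_pow_le_two_mul_succ_mul_choose_half_sq (m : ℕ) :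
    4 ^ m ≤ 2 * (m + 1) * m.choose (m / 2) ^ 2 := by
  obtain ⟨a, rfl | rfl⟩ := Nat.even_or_odd' m
  · rw [Nat.mul_div_cancel_left a two_pos, ← Nat.centralBinom_eq_two_mul_choose, pow_mul]
    rcases Nat.eq_zero_or_pos a with rfl | ha
    · decide
    · calc (4 ^ 2) ^ a ≤ 4 * a * a.centralBinom ^ 2 :=
            Nat.sixteen_pow_le_four_mul_mul_centralBinom_sq ha
        _ ≤ 2 * (2 * a + 1) * a.centralBinom ^ 2 := Nat.mul_le_mul_right _ (by omega)
  · have hcentral : (a + 1).centralBinom = 2 * (2 * a + 1).choose a := by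
      rw [Nat.centralBinom_eq_two_mul_choose, show 2 * (a + 1) = 2 * a + 1 + 1 by ring,
        Nat.choose_succ_succ', Nat.choose_symm_half]
      ring
    have key := Nat.sixteen_pow_le_four_mul_mul_centralBinom_sq (Nat.succ_pos a)
    rw [show (2 * a + 1) / 2 = a by omega]
    refine Nat.le_of_mul_le_mul_left ?_ (show 0 < 4 by decide)
    calc 4 * 4 ^ (2 * a + 1) = 16 ^ (a + 1) := by rw [pow_succ 4, pow_mul]; ring
      _ ≤ 4 * (a + 1) * (a + 1).centralBinom ^ 2 := key
      _ = 4 * (2 * (2 * a + 1 + 1) * (2 * a + 1).choose a ^ 2) := by rw [hcentral]; ring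

theorem sum_range_choose_mul_sub_two_mul (m j : ℕ) :
    ∑ k ∈ range (j + 1), ((m + 1).choose k : ℝ) * (m + 1 - 2 * k) = (m + 1) * m.choose j := by
  induction j with
  | zero => simp
  | succ j ih =>
    have habsorb : ((m : ℝ) + 1) * m.choose j = (m + 1).choose (j + 1) * (j + 1) := by
      exact_mod_cast Nat.add_one_mul_choose_eq m j
    have hpascal : ((m + 1).choose (j + 1) : ℝ) = m.choose j + m.choose (j + 1) := by
      exact_mod_cast Nat.choose_succ_succ' m j
    rw [sum_range_succ, ih]
    push_cast
    linear_combination 2 * habsorb + ((m : ℝ) + 1) * hpascal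

theorem sum_range_choose_mul_sub_two_mul_eq_zero (m : ℕ) :
    ∑ k ∈ range (m + 2), ((m + 1).choose k : ℝ) * (m + 1 - 2 * k) = 0 := by
  simp [sum_range_choose_mul_sub_two_mul m (m + 1)]

theorem two_mul_abs_sum_le_sum_abs {ι : Type*} [DecidableEq ι] {s t : Finset ι} {f : ι → ℝ}
    (hst : s ⊆ t) (hf : ∑ i ∈ t, f i = 0) : 2 * |∑ i ∈ s, f i| ≤ ∑ i ∈ t, |f i| := by
  rw [← sum_sdiff hst] at hf ⊢
  have hrest : ∑ i ∈ t \ s, f i = -∑ i ∈ s, f i := by linarith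
  calc 2 * |∑ i ∈ s, f i| = |∑ i ∈ t \ s, f i| + |∑ i ∈ s, f i| := by rw [hrest, abs_neg]; ring
    _ ≤ ∑ i ∈ t \ s, |f i| + ∑ i ∈ s, |f i| :=
      add_le_add (abs_sum_le_sum_abs _ _) (abs_sum_le_sum_abs _ _)

theorem two_mul_succ_mul_choose_le_sum_choose_mul_abs (m j : ℕ) (hj : j ≤ m) :
    2 * ((m + 1) * m.choose j) ≤
      ∑ k ∈ range (m + 2), ((m + 1).choose k : ℝ) * |2 * (k : ℝ) - (m + 1)| := by
  have hsub : range (j + 1) ⊆ range (m + 2) := range_subset_range.2 (by omega)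
  have h := two_mul_abs_sum_le_sum_abs hsub (sum_range_choose_mul_sub_two_mul_eq_zero m)
  rw [sum_range_choose_mul_sub_two_mul, abs_of_nonneg (by positivity)] at h
  convert h using 2 with k
  rw [abs_mul, Nat.abs_cast, abs_sub_comm]

def Equiv.boolFunFinset (ι : Type*) [Fintype ι] [DecidableEq ι] : (ι → Bool) ≃ Finset ι where
  toFun ε := {i | ε i}
  invFun s i := decide (i ∈ s)
  left_inv ε := by ext i; simp
  right_inv s := by ext i; simp

theorem Fintype.sum_fun_bool_apply_card {ι M : Type*} [Fintype ι] [DecidableEq ι]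
    [AddCommMonoid M] (g : ℕ → M) :
    ∑ ε : ι → Bool, g #{i | ε i} =
      ∑ k ∈ range (Fintype.card ι + 1), (Fintype.card ι).choose k • g k := by
  rw [← card_univ, ← sum_powerset_apply_card, powerset_univ]
  exact Fintype.sum_equiv (Equiv.boolFunFinset ι) _ _ fun _ => rfl

theorem sum_ite_one_neg_one_eq {ι : Type*} [Fintype ι] (ε : ι → Bool) :
    ∑ i, (if ε i then (1 : ℝ) else -1) = 2 * #{i | ε i} - Fintype.card ι := by
  have h : ∀ i, (if ε i then (1 : ℝ) else -1) = 2 * (if ε i then 1 else 0) - 1 := by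
    intro i; split <;> norm_num
  simp only [h, sum_sub_distrib, ← mul_sum, sum_boole, sum_const, card_univ, nsmul_one]

theorem integral_pi_uniformOfFintype {ι α : Type*} [Fintype ι] [DecidableEq ι] [Fintype α]
    [Nonempty α] [MeasurableSpace α] [MeasurableSingletonClass α] (f : (ι → α) → ℝ) :
    ∫ x, f x ∂(Measure.pi fun _ : ι => (PMF.uniformOfFintype α).toMeasure)
      = ((Fintype.card α : ℝ) ^ Fintype.card ι)⁻¹ * ∑ x, f x := by
  rw [integral_fintype .of_finite, mul_sum]
  refine sum_congr rfl fun x _ => ?_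
  rw [smul_eq_mul, measureReal_def, ← Set.univ_pi_singleton, Measure.pi_pi]
  simp only [PMF.toMeasure_apply_singleton _ _ (measurableSet_singleton _),
    PMF.uniformOfFintype_apply]
  simp

/-- Szarek-type lower bound: for `n` i.i.d. uniform `±1` signs,
`E[|∑_{i=1}^n ε_i|] ≥ sqrt(n/2)`. -/
theorem stmt13 (n : ℕ) :
    Real.sqrt ((n : ℝ) / 2) ≤
      ∫ ε, |∑ i, (if ε i then (1 : ℝ) else -1)|
        ∂(Measure.pi fun _ : Fin n => (PMF.uniformOfFintype Bool).toMeasure) := by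
  rw [integral_pi_uniformOfFintype]
  simp only [sum_ite_one_neg_one_eq]
  rw [Fintype.sum_fun_bool_apply_card fun k => |2 * (k : ℝ) - Fintype.card (Fin n)|]
  simp only [Fintype.card_fin, Fintype.card_bool, nsmul_eq_mul]
  cases n with
  | zero => simp
  | succ m =>
    have hbinom : (4 : ℝ) ^ m ≤ 2 * (m + 1) * (m.choose (m / 2)) ^ 2 := by
      exact_mod_cast Nat.four_pow_le_two_mul_succ_mul_choose_half_sq m
    push_cast
    calc √(((m : ℝ) + 1) / 2) ≤ ((2 : ℝ) ^ (m + 1))⁻¹ * (2 * ((m + 1) * m.choose (m / 2))) := by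
          have hpow : ((2 : ℝ) ^ (m + 1)) ^ 2 = 4 * 4 ^ m := by
            rw [← pow_mul, mul_comm, pow_mul, pow_succ']; norm_num
          rw [Real.sqrt_le_left (by positivity)]
          field_simp
          rw [hpow]
          linarith
      _ ≤ _ := by
          gcongr
          exact two_mul_succ_mul_choose_le_sum_choose_mul_abs m (m / 2) (Nat.div_le_self _ _)
end

section
/- Let k ≥ 1 and θ ≤ k/2, set r' = 1/2 − θ, and let ℓ(x,y,w) = [1/2 − y(⟨w,x⟩ − θ)]₊. There exists a distribution D over {0,1}^{k²+1} × {±1} with P[Y = −1] = 1 and min_{w ∈ H} E_D[ℓ(X,Y,w)] = [r']₊ (where H = {w ∈ ℝ_+^{k²+1} : ‖w‖₁ ≤ k}), such that with probability at least 1/2 over samples S ~ D^m, there exists w ∈ H with |Ê_S[ℓ(·,·,w)] − E_D[ℓ(·,·,w)]| ≥ Ω(sqrt(k²/m)). -/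
/-!
Take `D` uniform on the two points `p₀ = (0, -1)` and `p₁ = (e₀, -1)`. Every admissible `w` has
loss `[1/2 - θ]₊` at `p₀` and `[1/2 - θ + w₀]₊ ≥ [1/2 - θ]₊` at `p₁`, which identifies the minimum.
For `w = k e₀` the two losses differ by at least `k/2`, so on a sample containing `t` copies of
`p₁` the empirical and true risks differ by `|2t - m| (k/2) / (2m)`. Anti-concentration of the
fair binomial gives `|2t - m| ≥ √m/4` with probability at least `1/2`: the bad values of `t` form
at most `√m/4 + 1` levels, each carrying at most `C(m, ⌊m/2⌋) ≤ 2^m/√m` of the `2^m` samples.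
-/

open MeasureTheory Finset
open scoped ENNReal

namespace Nat

theorem centralBinom_sq_mul_le (n : ℕ) : centralBinom n ^ 2 * (2 * n + 1) ≤ 16 ^ n := by
  induction n with
  | zero => simp
  | succ n ih =>
    have hpos : 0 < (n + 1) ^ 2 := by positivity
    refine Nat.le_of_mul_le_mul_left ?_ hpos
    calc (n + 1) ^ 2 * (centralBinom (n + 1) ^ 2 * (2 * (n + 1) + 1))
        = (2 * n + 3) * ((n + 1) * centralBinom (n + 1)) ^ 2 := by ring
      _ = 4 * ((2 * n + 1) * (2 * n + 3)) * (centralBinom n ^ 2 * (2 * n + 1)) := by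
          rw [succ_mul_centralBinom_succ]; ring
      _ ≤ 4 * (4 * (n + 1) ^ 2) * 16 ^ n := Nat.mul_le_mul (Nat.mul_le_mul_left 4 (by nlinarith)) ih
      _ = (n + 1) ^ 2 * 16 ^ (n + 1) := by ring

theorem choose_half_sq_mul_le (m : ℕ) : m.choose (m / 2) ^ 2 * m ≤ 4 ^ m := by
  obtain ⟨n, rfl | rfl⟩ := even_or_odd' m
  · rw [mul_div_cancel_left₀ n two_ne_zero, ← centralBinom_eq_two_mul_choose, pow_mul]
    calc centralBinom n ^ 2 * (2 * n) ≤ centralBinom n ^ 2 * (2 * n + 1) := by gcongr; omega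
      _ ≤ 16 ^ n := centralBinom_sq_mul_le n
  · have hhalf : (2 * n + 1) / 2 = n := by omega
    have hle : (2 * n + 1).choose n ≤ 2 * centralBinom n := by
      cases n with
      | zero => simp
      | succ n =>
        rw [choose_succ_succ, two_mul (centralBinom _)]
        exact add_le_add (choose_le_centralBinom _ _) (choose_le_centralBinom _ _)
    calc (2 * n + 1).choose ((2 * n + 1) / 2) ^ 2 * (2 * n + 1)
        ≤ (2 * centralBinom n) ^ 2 * (2 * n + 1) := by rw [hhalf]; gcongr
      _ = 4 * (centralBinom n ^ 2 * (2 * n + 1)) := by ring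
      _ ≤ 4 * 16 ^ n := by gcongr; exact centralBinom_sq_mul_le n
      _ = 4 ^ (2 * n + 1) := by rw [pow_succ, pow_mul, mul_comm]; norm_num

end Nat

theorem card_filter_card_eq_choose {α : Type*} [Fintype α] (j : ℕ) :
    #{s : Finset α | #s = j} = (Fintype.card α).choose j := by
  rw [← card_univ, ← card_powersetCard]
  congr 1
  ext s
  simp

theorem card_filter_card_le_choose_half_mul {α : Type*} [Fintype α] (P : ℕ → Prop)
    [DecidablePred P] :
    #{s : Finset α | P #s} ≤
      (Fintype.card α).choose (Fintype.card α / 2) * #{j ∈ range (Fintype.card α + 1) | P j} := by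
  refine card_le_mul_card_image_of_maps_to (f := card) (fun s hs => ?_) _ fun j _ => ?_
  · simp only [mem_filter, mem_univ, true_and, mem_range] at hs ⊢
    exact ⟨Nat.lt_succ_of_le (card_le_univ s), hs⟩
  · calc #{s ∈ ({s | P #s} : Finset (Finset α)) | #s = j}
        ≤ #{s : Finset α | #s = j} := card_le_card (monotone_filter_left _ (subset_univ _))
      _ = (Fintype.card α).choose j := card_filter_card_eq_choose j
      _ ≤ _ := Nat.choose_le_middle j _

theorem card_le_of_forall_abs_sub_lt {T : Finset ℕ} {c r : ℝ} (hr : 0 ≤ r)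
    (h : ∀ j ∈ T, |(j : ℝ) - c| < r) : (#T : ℝ) ≤ 2 * r + 1 := by
  rcases T.eq_empty_or_nonempty with rfl | hT
  · simp only [card_empty, Nat.cast_zero]; linarith
  have hmin := h _ (T.min'_mem hT)
  have hmax := h _ (T.max'_mem hT)
  have hspan : T ⊆ Icc (T.min' hT) (T.max' hT) := fun j hj =>
    mem_Icc.mpr ⟨T.min'_le j hj, T.le_max' j hj⟩
  have hle : T.min' hT ≤ T.max' hT := T.min'_le _ (T.max'_mem hT)
  calc (#T : ℝ) ≤ ((T.max' hT - T.min' hT + 1 : ℕ) : ℝ) := by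
        gcongr
        exact (card_le_card hspan).trans (by rw [Nat.card_Icc]; omega)
    _ ≤ 2 * r + 1 := by
        push_cast [Nat.cast_sub hle]
        linarith [abs_lt.mp hmin, abs_lt.mp hmax]

theorem choose_half_mul_sqrt_le (m : ℕ) : (m.choose (m / 2) : ℝ) * √m ≤ 2 ^ m := by
  have hsq : ((m.choose (m / 2) : ℝ) * √m) ^ 2 ≤ (2 ^ m) ^ 2 := by
    rw [mul_pow, Real.sq_sqrt m.cast_nonneg, ← pow_mul, mul_comm m, pow_mul]
    exact_mod_cast Nat.choose_half_sq_mul_le m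
  exact le_of_sq_le_sq hsq (by positivity)

theorem card_filter_abs_two_mul_card_sub_lt_le {m : ℕ} (hm : 0 < m) :
    #{s : Finset (Fin m) | |2 * (#s : ℝ) - m| < √m / 4} ≤ 2 ^ (m - 1) := by
  set C := m.choose (m / 2)
  set T := #{j ∈ range (m + 1) | |2 * ((j : ℕ) : ℝ) - m| < √m / 4}
  have hbad : #{s : Finset (Fin m) | |2 * (#s : ℝ) - m| < √m / 4} ≤ C * T := by
    simpa using card_filter_card_le_choose_half_mul (α := Fin m) fun j => |2 * (j : ℝ) - m| < √m / 4
  have hT : (T : ℝ) ≤ √m / 4 + 1 := by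
    have := card_le_of_forall_abs_sub_lt (T := {j ∈ range (m + 1) | |2 * (j : ℝ) - m| < √m / 4})
      (c := m / 2) (r := √m / 8) (by positivity) fun j hj => by
      have := abs_lt.mp (mem_filter.mp hj).2
      exact abs_lt.mpr ⟨by linarith, by linarith⟩
    linarith
  -- `√m / 4 + 1 ≤ √m / 2` only once `m ≥ 16`; below that at most one level is bad.
  rcases lt_or_ge m 16 with hsmall | hlarge
  · have hT1 : T ≤ 1 := by
      have : √m < 4 := (Real.sqrt_lt' four_pos).mpr (by exact_mod_cast (show m < 4 ^ 2 from hsmall))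
      have : (T : ℝ) < 2 := by linarith
      exact Nat.lt_succ_iff.mp (by exact_mod_cast this)
    calc _ ≤ C * T := hbad
      _ ≤ C := by simpa using Nat.mul_le_mul_left C hT1
      _ ≤ 2 ^ (m - 1) := by
        simpa [Nat.sub_add_cancel hm] using Nat.choose_succ_le_two_pow (m - 1) (m / 2)
  · have h4 : 4 ≤ √m := Real.le_sqrt_of_sq_le (by exact_mod_cast (show 4 ^ 2 ≤ m from hlarge))
    have hpow : (2 : ℝ) ^ m = 2 * 2 ^ (m - 1) := by
      rw [← pow_succ', Nat.sub_add_cancel hm]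
    have : (#{s : Finset (Fin m) | |2 * (#s : ℝ) - m| < √m / 4} : ℝ) ≤ 2 ^ (m - 1) :=
      calc _ ≤ (C : ℝ) * T := by exact_mod_cast hbad
        _ ≤ C * (√m / 2) := by gcongr; linarith
        _ ≤ 2 ^ (m - 1) := by nlinarith [choose_half_mul_sqrt_le m]
    exact_mod_cast this

section TwoPoint

variable {α : Type*} [MeasurableSpace α] [MeasurableSingletonClass α]

noncomputable def twoPoint (a b : α) : Measure α :=
  (2⁻¹ : ℝ≥0∞) • (Measure.dirac a + Measure.dirac b)

instance (a b : α) : IsProbabilityMeasure (twoPoint a b) :=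
  ⟨by simp [twoPoint, ENNReal.inv_two_add_inv_two]⟩

theorem ae_twoPoint {a b : α} {P : α → Prop} (ha : P a) (hb : P b) : ∀ᵐ x ∂twoPoint a b, P x := by
  have hdirac {c : α} (hc : P c) : ∀ᵐ x ∂Measure.dirac c, P x := by
    rwa [ae_dirac_eq, Filter.eventually_pure]
  exact Measure.ae_smul_measure (ae_add_measure_iff.mpr ⟨hdirac ha, hdirac hb⟩) _

theorem integral_twoPoint (a b : α) (f : α → ℝ) : ∫ x, f x ∂twoPoint a b = (f a + f b) / 2 := by
  rw [twoPoint, integral_smul_measure, integral_add_measure (integrable_dirac (by simp))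
    (integrable_dirac (by simp)), integral_dirac, integral_dirac, smul_eq_mul, ENNReal.toReal_inv,
    ENNReal.toReal_ofNat]
  ring

theorem twoPoint_singleton_left {a b : α} (hab : a ≠ b) : twoPoint a b {a} = 2⁻¹ := by
  simp [twoPoint, hab.symm]

theorem twoPoint_singleton_right {a b : α} (hab : a ≠ b) : twoPoint a b {b} = 2⁻¹ := by
  simp [twoPoint, hab]

end TwoPoint

section Sample

variable {α : Type*} {a b : α}

def twoPointSample {ι : Type*} [DecidableEq ι] (a b : α) (s : Finset ι) (i : ι) : α :=
  if i ∈ s then b else a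

theorem twoPointSample_injective {ι : Type*} [DecidableEq ι] (hab : a ≠ b) :
    Function.Injective (twoPointSample (ι := ι) a b) := by
  intro s t hst
  ext i
  have := congrFun hst i
  by_cases hs : i ∈ s <;> by_cases ht : i ∈ t <;> simp_all [twoPointSample, hab.symm]

variable [MeasurableSpace α] [MeasurableSingletonClass α]

theorem pi_twoPoint_image_twoPointSample {ι : Type*} [Fintype ι] [DecidableEq ι] (hab : a ≠ b)
    (F : Finset (Finset ι)) :
    Measure.pi (fun _ : ι => twoPoint a b) (twoPointSample a b '' F)
      = #F * 2⁻¹ ^ Fintype.card ι := by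
  classical
  have hsingle : ∀ s : Finset ι,
      Measure.pi (fun _ : ι => twoPoint a b) {twoPointSample a b s} = 2⁻¹ ^ Fintype.card ι := by
    intro s
    rw [Measure.pi_singleton, ← card_univ, ← prod_const]
    refine prod_congr rfl fun i _ => ?_
    by_cases hi : i ∈ s
    · simp [twoPointSample, hi, twoPoint_singleton_right hab]
    · simp [twoPointSample, hi, twoPoint_singleton_left hab]
  rw [← coe_image, ← sum_measure_singleton, sum_image (twoPointSample_injective hab).injOn]
  simp [hsingle]

theorem sum_twoPointSample_div_sub_integral_twoPoint (f : α → ℝ) {m : ℕ} (hm : 0 < m)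
    (s : Finset (Fin m)) :
    (∑ i, f (twoPointSample a b s i)) / m - ∫ x, f x ∂twoPoint a b
      = (2 * #s - m) * (f b - f a) / (2 * m) := by
  have hsum : ∑ i, f (twoPointSample a b s i) = #s * f b + (m - #s) * f a := by
    have hs : #s ≤ m := by simpa using card_le_univ s
    simp only [twoPointSample, apply_ite f, sum_ite, sum_const, nsmul_eq_mul, filter_not,
      filter_mem_eq_of_subset (subset_univ s), card_sdiff, inter_univ, card_univ, Fintype.card_fin]
    rw [Nat.cast_sub hs]
  rw [hsum, integral_twoPoint]
  field_simp
  ring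

end Sample

theorem one_half_le_pi_twoPoint {α : Type*} [MeasurableSpace α] [MeasurableSingletonClass α]
    {a b : α} (hab : a ≠ b) {m : ℕ} (hm : 0 < m) {E : Set (Fin m → α)}
    (hE : ∀ s : Finset (Fin m), √m / 4 ≤ |2 * (#s : ℝ) - m| → twoPointSample a b s ∈ E) :
    1 / 2 ≤ Measure.pi (fun _ : Fin m => twoPoint a b) E := by
  set F : Finset (Finset (Fin m)) := {s | √m / 4 ≤ |2 * (#s : ℝ) - m|}
  have hF : 2 ^ (m - 1) ≤ #F := by
    have hbad := card_filter_abs_two_mul_card_sub_lt_le hm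
    have htot : #{s : Finset (Fin m) | |2 * (#s : ℝ) - m| < √m / 4} + #F = 2 ^ m := by
      simpa [F] using card_filter_add_card_filter_not (s := (univ : Finset (Finset (Fin m))))
        fun s => |2 * (#s : ℝ) - m| < √m / 4
    have : 2 ^ m = 2 * 2 ^ (m - 1) := by rw [← pow_succ', Nat.sub_add_cancel hm]
    omega
  have hhalf : (2 : ℝ≥0∞) ^ (m - 1) * 2⁻¹ ^ m = 1 / 2 := by
    obtain ⟨n, rfl⟩ := Nat.exists_eq_add_of_lt hm
    rw [zero_add, Nat.add_sub_cancel, pow_succ, ← mul_assoc, ← mul_pow,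
      ENNReal.mul_inv_cancel two_ne_zero ENNReal.ofNat_ne_top, one_pow, one_mul, one_div]
  calc (1 / 2 : ℝ≥0∞) = 2 ^ (m - 1) * 2⁻¹ ^ m := hhalf.symm
    _ ≤ #F * 2⁻¹ ^ m := by gcongr; exact_mod_cast hF
    _ = Measure.pi (fun _ : Fin m => twoPoint a b) (twoPointSample a b '' F) := by
      rw [pi_twoPoint_image_twoPointSample hab, Fintype.card_fin]
    _ ≤ Measure.pi (fun _ : Fin m => twoPoint a b) E :=
      measure_mono <| by
        rintro _ ⟨s, hs, rfl⟩
        exact hE s (by simpa [F] using hs)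

theorem half_le_max_sub_max {k θ : ℝ} (hk : 0 ≤ k) (hθ : θ ≤ k / 2) :
    k / 2 ≤ max 0 (1 / 2 - θ + k) - max 0 (1 / 2 - θ) := by
  have := max_le (show 0 ≤ 1 / 2 + k / 2 - θ by linarith) (show 1 / 2 - θ ≤ 1 / 2 + k / 2 - θ by
    linarith)
  rw [max_eq_right (by linarith)]
  linarith

theorem one_div_sixteen_mul_sqrt_le_abs_mul_div {k m x δ : ℝ} (hk : 0 ≤ k) (hm : 0 < m)
    (hx : √m / 4 ≤ |x|) (hδ : k / 2 ≤ δ) : 1 / 16 * √(k ^ 2 / m) ≤ |x * δ / (2 * m)| := by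
  rw [abs_div, abs_mul, abs_of_nonneg (by linarith : 0 ≤ δ), abs_of_pos (by linarith : 0 < 2 * m),
    Real.sqrt_div' _ hm.le, Real.sqrt_sq hk]
  calc 1 / 16 * (k / √m) = √m / 4 * (k / 2) / (2 * m) := by
        field_simp
        rw [Real.sq_sqrt hm.le]
        ring
    _ ≤ |x| * δ / (2 * m) := by gcongr

section WinnowLoss

variable {ι : Type*} [Fintype ι]

noncomputable def winnowLoss (θ : ℝ) (w : ι → ℝ) (p : (ι → ℝ) × ℝ) : ℝ :=
  max 0 (1 / 2 - p.2 * ((∑ j, w j * p.1 j) - θ))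

theorem winnowLoss_zero_neg_one (θ : ℝ) (w : ι → ℝ) :
    winnowLoss θ w (0, -1) = max 0 (1 / 2 - θ) := by
  simp [winnowLoss]

theorem winnowLoss_single_neg_one [DecidableEq ι] (θ : ℝ) (w : ι → ℝ) (i : ι) :
    winnowLoss θ w (Pi.single i 1, -1) = max 0 (1 / 2 - θ + w i) := by
  simp [winnowLoss, Pi.single_apply, sub_add]

end WinnowLoss

theorem stmt14_general (k : ℕ) (θ : ℝ) (hθ : θ ≤ (k : ℝ) / 2) :
    ∃ D : Measure ((Fin (k ^ 2 + 1) → ℝ) × ℝ), ∃ _ : IsProbabilityMeasure D, ∃ c : ℝ,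
      0 < c ∧
      (∀ᵐ p ∂D, p.2 = -1 ∧ ∀ j, p.1 j = 0 ∨ p.1 j = 1) ∧
      IsLeast {v : ℝ | ∃ w : Fin (k ^ 2 + 1) → ℝ, (∀ j, 0 ≤ w j) ∧ (∑ j, |w j|) ≤ k ∧
          v = ∫ p, max 0 (1 / 2 - p.2 * ((∑ j, w j * p.1 j) - θ)) ∂D}
        (max 0 (1 / 2 - θ)) ∧
      ∀ m : ℕ, 0 < m →
        (1 / 2 : ENNReal) ≤ (Measure.pi fun _ : Fin m => D)
          {S | ∃ w : Fin (k ^ 2 + 1) → ℝ, (∀ j, 0 ≤ w j) ∧ (∑ j, |w j|) ≤ k ∧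
            c * Real.sqrt ((k ^ 2 : ℝ) / m) ≤
              |(∑ i, max 0 (1 / 2 - (S i).2 * ((∑ j, w j * (S i).1 j) - θ))) / m -
                ∫ p, max 0 (1 / 2 - p.2 * ((∑ j, w j * p.1 j) - θ)) ∂D|} := by
  classical
  set p₀ : (Fin (k ^ 2 + 1) → ℝ) × ℝ := (0, -1)
  set p₁ : (Fin (k ^ 2 + 1) → ℝ) × ℝ := (Pi.single 0 1, -1)
  have hp : p₀ ≠ p₁ := fun h => by simpa [p₀, p₁] using congrFun (congrArg Prod.fst h) 0
  refine ⟨twoPoint p₀ p₁, inferInstance, 1 / 16, by norm_num,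
    ae_twoPoint ⟨rfl, fun _ => .inl rfl⟩ ⟨rfl, fun j => ?_⟩, ⟨⟨0, by simp, by simp, ?_⟩, ?_⟩,
    fun m hm => one_half_le_pi_twoPoint hp hm fun s hs => ⟨Pi.single 0 k, ?_, ?_, ?_⟩⟩
  · simp only [p₁, Pi.single_apply]
    split_ifs <;> simp
  · change _ = ∫ p, winnowLoss θ 0 p ∂twoPoint p₀ p₁
    rw [integral_twoPoint, winnowLoss_zero_neg_one, winnowLoss_single_neg_one]
    simp
  · rintro _ ⟨w, hw, -, rfl⟩
    change _ ≤ ∫ p, winnowLoss θ w p ∂twoPoint p₀ p₁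
    rw [integral_twoPoint, winnowLoss_zero_neg_one, winnowLoss_single_neg_one]
    linarith [max_le_max_left 0 (show 1 / 2 - θ ≤ 1 / 2 - θ + w 0 by linarith [hw 0])]
  · exact fun j => by rw [Pi.single_apply]; split_ifs <;> positivity
  · simp [Pi.single_apply, apply_ite]
  · change _ ≤ |(∑ i, winnowLoss θ (Pi.single 0 k) (twoPointSample p₀ p₁ s i)) / m -
      ∫ p, winnowLoss θ (Pi.single 0 k) p ∂twoPoint p₀ p₁|
    rw [sum_twoPointSample_div_sub_integral_twoPoint _ hm, winnowLoss_zero_neg_one,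
      winnowLoss_single_neg_one, Pi.single_eq_same]
    exact one_div_sixteen_mul_sqrt_le_abs_mul_div k.cast_nonneg (by exact_mod_cast hm) hs
      (half_le_max_sub_max k.cast_nonneg hθ)

/-- Uniform convergence lower bound for the Winnow loss: for `k ≥ 1` and `θ ≤ k/2` there is
a distribution `D` on `{0,1}^{k²+1} × {±1}` putting all mass on the label `−1`, whose best
achievable loss over `H = {w ≥ 0 : ‖w‖₁ ≤ k}` equals `[1/2 − θ]₊`, and a constant `c > 0`,
such that with probability at least `1/2` over samples of any size `m`, some `w ∈ H` has
empirical loss deviating from its true loss by at least `c·sqrt(k²/m)`. -/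
theorem stmt14 (k : ℕ) (hk : 1 ≤ k) (θ : ℝ) (hθ : θ ≤ (k : ℝ) / 2) :
    ∃ D : Measure ((Fin (k ^ 2 + 1) → ℝ) × ℝ), ∃ _ : IsProbabilityMeasure D, ∃ c : ℝ,
      0 < c ∧
      (∀ᵐ p ∂D, p.2 = -1 ∧ ∀ j, p.1 j = 0 ∨ p.1 j = 1) ∧
      IsLeast {v : ℝ | ∃ w : Fin (k ^ 2 + 1) → ℝ, (∀ j, 0 ≤ w j) ∧ (∑ j, |w j|) ≤ k ∧
          v = ∫ p, max 0 (1 / 2 - p.2 * ((∑ j, w j * p.1 j) - θ)) ∂D}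
        (max 0 (1 / 2 - θ)) ∧
      ∀ m : ℕ, 0 < m →
        (1 / 2 : ENNReal) ≤ (Measure.pi fun _ : Fin m => D)
          {S | ∃ w : Fin (k ^ 2 + 1) → ℝ, (∀ j, 0 ≤ w j) ∧ (∑ j, |w j|) ≤ k ∧
            c * Real.sqrt ((k ^ 2 : ℝ) / m) ≤
              |(∑ i, max 0 (1 / 2 - (S i).2 * ((∑ j, w j * (S i).1 j) - θ))) / m -
                ∫ p, max 0 (1 / 2 - p.2 * ((∑ j, w j * p.1 j) - θ)) ∂D|} :=
  stmt14_general k θ hθ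
end

section
/- Let k ≥ r ≥ 0, θ = r − 1/2, and let S = ((x_1,1),...,(x_m,1)) consist of m instances in [0,1]^d with all-positive labels. Then the logarithm of the (∞,ε)-proper covering number of the loss class {(x,y) ↦ [1/2 − y(⟨w,x⟩ − θ)]₊ : w ∈ ℝ_+^d, ‖w‖₁ ≤ k} with respect to S is at most 16·r·k·ln(d)·ln(3m)/ε². -/
/-!
Winnow is exponentiated gradient on `{w ≥ 0, ‖w‖₁ ≤ k}`. Fix a target `w`. Run exponential
weights with learning rate `η = ε / (2r)`, feeding in each round the loss vector `σ • x_i`,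
where `i` is the sample on which the current point's capped prediction `min ⟨v, x_i⟩ r` is
farthest from the target's and `σ ∈ {-1, 0, 1}` says whether it undershoots, agrees or
overshoots. The second-order regret bound of exponential weights makes the average of these
worst deviations at most `k ln(d+1) / (ηT) + ηr ≤ ε` once `T ≈ 16 r k ln d / ε²`, so some
iterate is `ε`-close to `w` on every sample. Every iterate is determined by a sequence of at
most `T` choices `(i, σ)`, independently of `w`, which leaves at most `(3m)^T` candidates.
-/

open Finset Real

namespace WinnowCover

section ExpWeights

variable {ι : Type*} [Fintype ι]

noncomputable def partition (η : ℝ) (S : ι → ℝ) : ℝ := ∑ j, exp (-(η * S j))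

noncomputable def expWeights (η : ℝ) (S : ι → ℝ) (j : ι) : ℝ := exp (-(η * S j)) / partition η S

lemma log_partition_zero (η : ℝ) : log (partition η (0 : ι → ℝ)) = log (Fintype.card ι) := by
  simp [partition]

variable [Nonempty ι]

lemma partition_pos (η : ℝ) (S : ι → ℝ) : 0 < partition η S :=
  sum_pos (fun _ _ => exp_pos _) univ_nonempty

lemma expWeights_pos (η : ℝ) (S : ι → ℝ) (j : ι) : 0 < expWeights η S j :=
  div_pos (exp_pos _) (partition_pos η S)

lemma sum_expWeights (η : ℝ) (S : ι → ℝ) : ∑ j, expWeights η S j = 1 := by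
  simp only [expWeights, ← sum_div]
  exact div_self (partition_pos η S).ne'

lemma partition_add (η : ℝ) (S ℓ : ι → ℝ) :
    partition η (S + ℓ) = partition η S * ∑ j, expWeights η S j * exp (-(η * ℓ j)) := by
  rw [mul_sum]
  refine sum_congr rfl fun j _ => ?_
  have := (partition_pos η S).ne'
  simp only [expWeights, Pi.add_apply, mul_add, neg_add, exp_add]
  field_simp

lemma log_partition_add_le (η : ℝ) (S ℓ : ι → ℝ) (hℓ : ∀ j, |η * ℓ j| ≤ 1) :
    log (partition η (S + ℓ)) ≤ log (partition η S) - η * (expWeights η S ⬝ᵥ ℓ)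
      + η ^ 2 * (expWeights η S ⬝ᵥ ℓ ^ 2) := by
  set p := expWeights η S
  -- `exp z ≤ 1 + z + z²` for `|z| ≤ 1`, then `log y ≤ y - 1`
  have hexp : ∀ j, exp (-(η * ℓ j)) - 1 ≤ -(η * ℓ j) + (η * ℓ j) ^ 2 := fun j => by
    have h := abs_exp_sub_one_sub_id_le (x := -(η * ℓ j)) (by rw [abs_neg]; exact hℓ j)
    rw [neg_sq] at h
    linarith [(abs_le.1 h).2]
  have hpos : 0 < ∑ j, p j * exp (-(η * ℓ j)) :=
    sum_pos (fun j _ => mul_pos (expWeights_pos η S j) (exp_pos _)) univ_nonempty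
  rw [partition_add, log_mul (partition_pos η S).ne' hpos.ne']
  have hlog := log_le_sub_one_of_pos hpos
  have hsum : ∑ j, p j * exp (-(η * ℓ j)) - 1 ≤ -η * (p ⬝ᵥ ℓ) + η ^ 2 * (p ⬝ᵥ ℓ ^ 2) := by
    calc ∑ j, p j * exp (-(η * ℓ j)) - 1 = ∑ j, p j * (exp (-(η * ℓ j)) - 1) := by
          simp only [mul_sub, mul_one, sum_sub_distrib, sum_expWeights, p]
      _ ≤ ∑ j, p j * (-(η * ℓ j) + (η * ℓ j) ^ 2) :=
          sum_le_sum fun j _ => mul_le_mul_of_nonneg_left (hexp j) (expWeights_pos η S j).le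
      _ = -η * (p ⬝ᵥ ℓ) + η ^ 2 * (p ⬝ᵥ ℓ ^ 2) := by
          simp only [dotProduct, mul_sum, ← sum_add_distrib, Pi.pow_apply]
          exact sum_congr rfl fun j _ => by ring
  linarith

lemma neg_mul_dotProduct_le_log_partition {η : ℝ} (hη : 0 ≤ η) {q : ι → ℝ} (hq0 : 0 ≤ q)
    (hq1 : ∑ j, q j = 1) (S : ι → ℝ) : -(η * (q ⬝ᵥ S)) ≤ log (partition η S) := by
  obtain ⟨j₀, -, hj₀⟩ := exists_min_image univ S univ_nonempty
  have hS : S j₀ ≤ q ⬝ᵥ S := calc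
    S j₀ = ∑ j, q j * S j₀ := by rw [← sum_mul, hq1, one_mul]
    _ ≤ q ⬝ᵥ S := sum_le_sum fun j _ => mul_le_mul_of_nonneg_left (hj₀ j (mem_univ j)) (hq0 j)
  calc -(η * (q ⬝ᵥ S)) ≤ -(η * S j₀) := neg_le_neg (mul_le_mul_of_nonneg_left hS hη)
    _ = log (exp (-(η * S j₀))) := (log_exp _).symm
    _ ≤ log (partition η S) := log_le_log (exp_pos _)
        (single_le_sum (f := fun j => exp (-(η * S j))) (fun _ _ => (exp_pos _).le) (mem_univ j₀))

theorem sum_regret_expWeights_le {η : ℝ} (hη : 0 < η) (ℓ : ℕ → ι → ℝ)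
    (hℓ : ∀ t j, |η * ℓ t j| ≤ 1) {q : ι → ℝ} (hq0 : 0 ≤ q) (hq1 : ∑ j, q j = 1) (T : ℕ) :
    ∑ t ∈ range T, (expWeights η (∑ s ∈ range t, ℓ s) ⬝ᵥ ℓ t - q ⬝ᵥ ℓ t
      - η * (expWeights η (∑ s ∈ range t, ℓ s) ⬝ᵥ ℓ t ^ 2)) ≤ log (Fintype.card ι) / η := by
  set Φ : ℕ → ℝ := fun t => log (partition η (∑ s ∈ range t, ℓ s))
  have hstep : ∀ t, η * (expWeights η (∑ s ∈ range t, ℓ s) ⬝ᵥ ℓ t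
      - η * (expWeights η (∑ s ∈ range t, ℓ s) ⬝ᵥ ℓ t ^ 2)) ≤ Φ t - Φ (t + 1) := fun t => by
    have h := log_partition_add_le η (∑ s ∈ range t, ℓ s) (ℓ t) (hℓ t)
    rw [← sum_range_succ] at h
    simp only [Φ]
    linarith
  have hΦ0 : Φ 0 = log (Fintype.card ι) := by simp only [Φ, sum_range_zero, log_partition_zero]
  have hΦT : -(η * ∑ t ∈ range T, q ⬝ᵥ ℓ t) ≤ Φ T := by
    rw [← dotProduct_sum]
    exact neg_mul_dotProduct_le_log_partition hη.le hq0 hq1 _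
  rw [le_div_iff₀ hη, mul_comm, mul_sum]
  calc ∑ t ∈ range T, η * (expWeights η (∑ s ∈ range t, ℓ s) ⬝ᵥ ℓ t - q ⬝ᵥ ℓ t
        - η * (expWeights η (∑ s ∈ range t, ℓ s) ⬝ᵥ ℓ t ^ 2))
      = ∑ t ∈ range T, η * (expWeights η (∑ s ∈ range t, ℓ s) ⬝ᵥ ℓ t
        - η * (expWeights η (∑ s ∈ range t, ℓ s) ⬝ᵥ ℓ t ^ 2))
        - η * ∑ t ∈ range T, q ⬝ᵥ ℓ t := by
        rw [mul_sum, ← sum_sub_distrib]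
        exact sum_congr rfl fun t _ => by ring
    _ ≤ ∑ t ∈ range T, (Φ t - Φ (t + 1)) - η * ∑ t ∈ range T, q ⬝ᵥ ℓ t := by
        gcongr with t
        exact hstep t
    _ ≤ log (Fintype.card ι) := by
        rw [sum_range_sub', hΦ0]
        linarith

end ExpWeights

lemma iterate_add_zero_eq_sum {M : Type*} [AddCommMonoid M] (g : M → M) (n : ℕ) :
    (fun s => s + g s)^[n] 0 = ∑ t ∈ range n, g ((fun s => s + g s)^[t] 0) := by
  induction n with
  | zero => simp
  | succ n ih => rw [Function.iterate_succ_apply', sum_range_succ, ← ih]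

lemma sum_fin_ite_lt {M : Type*} [AddCommMonoid M] (g : ℕ → M) {t T : ℕ} (h : t ≤ T) :
    ∑ s : Fin T, (if (s : ℕ) < t then g s else 0) = ∑ s ∈ range t, g s := by
  rw [Fin.sum_univ_eq_sum_range (fun s => if s < t then g s else 0), ← sum_filter]
  congr 1
  ext s
  simp only [mem_filter, mem_range]
  omega

lemma abs_min_sub_min_le {a b r : ℝ} (ha : 0 ≤ a) (hb : 0 ≤ b) (hr : 0 ≤ r) :
    |min a r - min b r| ≤ r := by
  rw [abs_le]
  constructor <;> linarith [le_min ha hr, le_min hb hr, min_le_right a r, min_le_right b r]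

/-- `σ = -1, 0, 1` according as `min A r` undershoots, meets or overshoots `min B r`. -/
lemma exists_sign_abs_min_sub_min_le {η r : ℝ} (hη0 : 0 ≤ η) (hη1 : η ≤ 1) (hr : 0 ≤ r)
    (A B : ℝ) : ∃ σ : SignType, |min A r - min B r| ≤ σ * (A - B) - η * (σ ^ 2 * A) + η * r := by
  rcases lt_trichotomy (min A r) (min B r) with h | h | h
  · refine ⟨-1, ?_⟩
    have hA : A < r := by
      by_contra! hA
      exact h.not_ge ((min_eq_right hA).symm ▸ min_le_right B r)
    rw [abs_of_neg (sub_neg.2 h), min_eq_left hA.le, SignType.coe_neg_one]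
    nlinarith [min_le_left B r]
  · exact ⟨0, by simp [h, mul_nonneg hη0 hr]⟩
  · refine ⟨1, ?_⟩
    have hB : B < r := by
      by_contra! hB
      exact h.not_ge ((min_eq_right hB).symm ▸ min_le_right A r)
    rw [abs_of_pos (sub_pos.2 h), min_eq_left hB.le, SignType.coe_one]
    rcases le_total A r with hAr | hAr
    · rw [min_eq_left hAr]; nlinarith
    · rw [min_eq_right hAr]; nlinarith

section Winnow

variable {d m : ℕ}

/-- `none` is a slack coordinate: the simplex over `Option (Fin d)`, scaled by `k` and restricted
to `some`, is `{w ≥ 0, ∑ w ≤ k}`. -/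
def pad (v : Fin d → ℝ) : Option (Fin d) → ℝ := Option.elim' 0 v

lemma pad_mem_Icc {v : Fin d → ℝ} (hv : ∀ j, v j ∈ Set.Icc 0 1) (j : Option (Fin d)) :
    pad v j ∈ Set.Icc 0 1 := by
  cases j with
  | none => simp [pad]
  | some j => exact hv j

lemma dotProduct_pad (P : Option (Fin d) → ℝ) (v : Fin d → ℝ) :
    P ⬝ᵥ pad v = (P ∘ some) ⬝ᵥ v := by
  simp [dotProduct, Fintype.sum_option, pad]

lemma dotProduct_pad_sq_le {P : Option (Fin d) → ℝ} (hP : 0 ≤ P) {v : Fin d → ℝ}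
    (hv : ∀ j, v j ∈ Set.Icc 0 1) : P ⬝ᵥ pad v ^ 2 ≤ P ⬝ᵥ pad v :=
  sum_le_sum fun j _ => mul_le_mul_of_nonneg_left
    (sq_le (pad_mem_Icc hv j).1 (pad_mem_Icc hv j).2) (hP j)

def grad (x : Fin m → Fin d → ℝ) (c : Fin m × SignType) : Option (Fin d) → ℝ :=
  (c.2 : ℝ) • pad (x c.1)

lemma abs_grad_le {x : Fin m → Fin d → ℝ} (hx : ∀ i j, x i j ∈ Set.Icc 0 1)
    (c : Fin m × SignType) (j : Option (Fin d)) : |grad x c j| ≤ 1 := by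
  have hσ : |(c.2 : ℝ)| ≤ 1 := by rcases c.2 <;> simp
  have hp := pad_mem_Icc (hx c.1) j
  rw [grad, Pi.smul_apply, smul_eq_mul, abs_mul, abs_of_nonneg hp.1]
  exact mul_le_one₀ hσ hp.1 hp.2

lemma exists_grad_le [Nonempty (Fin m)] {x : Fin m → Fin d → ℝ}
    (hx : ∀ i j, x i j ∈ Set.Icc 0 1) {η r : ℝ} (hη0 : 0 ≤ η) (hη1 : η ≤ 1) (hr : 0 ≤ r)
    {P : Option (Fin d) → ℝ} (hP : 0 ≤ P) (U : Option (Fin d) → ℝ) :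
    ∃ c, ∀ i, |min ((P ∘ some) ⬝ᵥ x i) r - min ((U ∘ some) ⬝ᵥ x i) r| ≤
      P ⬝ᵥ grad x c - U ⬝ᵥ grad x c - η * (P ⬝ᵥ grad x c ^ 2) + η * r := by
  obtain ⟨i₀, -, hi₀⟩ := exists_max_image univ
    (fun i => |min ((P ∘ some) ⬝ᵥ x i) r - min ((U ∘ some) ⬝ᵥ x i) r|) univ_nonempty
  obtain ⟨σ, hσ⟩ := exists_sign_abs_min_sub_min_le hη0 hη1 hr
    ((P ∘ some) ⬝ᵥ x i₀) ((U ∘ some) ⬝ᵥ x i₀)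
  refine ⟨(i₀, σ), fun i => (hi₀ i (mem_univ i)).trans (hσ.trans ?_)⟩
  have hsq : grad x (i₀, σ) ^ 2 = ((σ : ℝ) ^ 2) • pad (x i₀) ^ 2 := by
    ext j; simp [grad, mul_pow]
  have hQ := dotProduct_pad_sq_le hP (hx i₀)
  rw [hsq]
  simp only [grad, dotProduct_smul, dotProduct_pad, smul_eq_mul] at hQ ⊢
  nlinarith [mul_le_mul_of_nonneg_left hQ (mul_nonneg hη0 (sq_nonneg (σ : ℝ)))]

noncomputable def coverPoint (k η : ℝ) (S : Option (Fin d) → ℝ) : Fin d → ℝ :=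
  (k • expWeights η S) ∘ some

lemma coverPoint_nonneg {k : ℝ} (hk : 0 ≤ k) (η : ℝ) (S : Option (Fin d) → ℝ) :
    0 ≤ coverPoint k η S := fun j =>
  mul_nonneg hk (expWeights_pos η S j).le

lemma sum_abs_coverPoint_le {k : ℝ} (hk : 0 ≤ k) (η : ℝ) (S : Option (Fin d) → ℝ) :
    ∑ j, |coverPoint k η S j| ≤ k := by
  have h := sum_expWeights η S
  rw [Fintype.sum_option] at h
  rw [sum_congr rfl fun j _ => abs_of_nonneg (coverPoint_nonneg hk η S j)]
  simp only [coverPoint, Function.comp_apply, Pi.smul_apply, smul_eq_mul, ← mul_sum]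
  nlinarith [expWeights_pos η S none]

lemma exists_smul_simplex_eq {k : ℝ} (hk : 0 < k) {w : Fin d → ℝ} (hw0 : 0 ≤ w)
    (hwk : ∑ j, w j ≤ k) :
    ∃ q : Option (Fin d) → ℝ, 0 ≤ q ∧ ∑ j, q j = 1 ∧ (k • q) ∘ some = w := by
  refine ⟨Option.elim' (1 - (∑ j, w j) / k) (fun j => w j / k), ?_, ?_, ?_⟩
  · rintro (_ | j)
    · simpa [div_le_one hk] using hwk
    · exact div_nonneg (hw0 j) hk.le
  · simp only [Fintype.sum_option, Option.elim', ← sum_div]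
    ring
  · ext j
    simp [mul_div_cancel₀ _ hk.ne']

theorem exists_coverPoint_near [Nonempty (Fin m)] {x : Fin m → Fin d → ℝ}
    (hx : ∀ i j, x i j ∈ Set.Icc 0 1) {k η r ε : ℝ} (hk : 0 < k) (hη0 : 0 < η) (hη1 : η ≤ 1)
    (hr : 0 ≤ r) {T : ℕ} (hT : 0 < T) (hTε : k * log (d + 1) / η + T * (η * r) ≤ T * ε)
    {w : Fin d → ℝ} (hw0 : 0 ≤ w) (hwk : ∑ j, w j ≤ k) :
    ∃ f : Fin T → Fin m × SignType, ∀ i,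
      |min (coverPoint k η (∑ t, grad x (f t)) ⬝ᵥ x i) r - min (w ⬝ᵥ x i) r| ≤ ε := by
  obtain ⟨q, hq0, hq1, hkq⟩ := exists_smul_simplex_eq hk hw0 hwk
  choose c hc using fun S : Option (Fin d) → ℝ =>
    exists_grad_le hx hη0.le hη1 hr (P := k • expWeights η S)
      (fun j => mul_nonneg hk.le (expWeights_pos η S j).le) (k • q)
  set traj : ℕ → Option (Fin d) → ℝ := fun t => (fun S => S + grad x (c S))^[t] 0
  set ℓ : ℕ → Option (Fin d) → ℝ := fun t => grad x (c (traj t))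
  have htraj : ∀ t, traj t = ∑ s ∈ range t, ℓ s := fun t => iterate_add_zero_eq_sum _ t
  have hℓ : ∀ t j, |η * ℓ t j| ≤ 1 := fun t j => by
    rw [abs_mul, abs_of_pos hη0]
    exact mul_le_one₀ hη1 (abs_nonneg _) (abs_grad_le hx _ j)
  have hreg := sum_regret_expWeights_le hη0 ℓ hℓ hq0 hq1 T
  simp only [← htraj, Fintype.card_option, Fintype.card_fin, Nat.cast_add, Nat.cast_one] at hreg
  have hsum : ∑ t ∈ range T, (k • expWeights η (traj t) ⬝ᵥ ℓ t - k • q ⬝ᵥ ℓ t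
      - η * (k • expWeights η (traj t) ⬝ᵥ ℓ t ^ 2) + η * r) ≤ ∑ t ∈ range T, ε := by
    calc _ = k * ∑ t ∈ range T, (expWeights η (traj t) ⬝ᵥ ℓ t - q ⬝ᵥ ℓ t
          - η * (expWeights η (traj t) ⬝ᵥ ℓ t ^ 2)) + T * (η * r) := by
          simp only [smul_dotProduct, smul_eq_mul, sum_add_distrib, sum_const, card_range,
            nsmul_eq_mul, mul_sum]
          congr 1
          exact sum_congr rfl fun t _ => by ring
      _ ≤ k * (log (d + 1) / η) + T * (η * r) := by gcongr
      _ ≤ ∑ t ∈ range T, ε := by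
          rw [sum_const, card_range, nsmul_eq_mul, ← mul_div_assoc]
          exact hTε
  obtain ⟨t, ht, hBt⟩ := exists_le_of_sum_le (nonempty_range_iff.2 hT.ne') hsum
  -- choices of sign `0` after round `t` leave the cumulative loss at `traj t`
  refine ⟨fun s => if (s : ℕ) < t then c (traj s) else (Classical.arbitrary _, 0), fun i => ?_⟩
  have hf : ∑ s : Fin T, grad x (if (s : ℕ) < t then c (traj s) else (Classical.arbitrary _, 0))
      = traj t := by
    rw [htraj, ← sum_fin_ite_lt ℓ (mem_range.1 ht).le]
    refine sum_congr rfl fun s _ => ?_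
    split_ifs <;> simp [ℓ, grad]
  rw [hf, ← hkq]
  exact (hc (traj t) i).trans hBt

end Winnow

lemma abs_hinge_sub_hinge (a b r : ℝ) :
    |max 0 (1 / 2 - (a - (r - 1 / 2))) - max 0 (1 / 2 - (b - (r - 1 / 2)))| =
      |min b r - min a r| := by
  have h : ∀ s, max 0 (1 / 2 - (s - (r - 1 / 2))) = r - min s r := fun s => by
    rw [← max_sub_sub_left, sub_self, max_comm]
    ring_nf
  rw [h, h, sub_sub_sub_cancel_left]

lemma log_card_image_pi_le {α β : Type*} [DecidableEq α] [Fintype β] [Nonempty β] (T : ℕ)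
    (F : (Fin T → β) → α) : log (univ.image F).card ≤ T * log (Fintype.card β) := by
  have hpos : 0 < (univ.image F).card := (univ_nonempty.image F).card_pos
  calc log (univ.image F).card ≤ log ((Fintype.card β ^ T : ℕ) : ℝ) := by
        gcongr
        exact card_image_le.trans_eq (by simp)
    _ = T * log (Fintype.card β) := by push_cast; rw [log_pow]

lemma regret_add_le_of_horizon {d : ℕ} (hd : 1 < d) {r k ε : ℝ} (hε : 0 < ε) (hεr : ε < r)
    (hrk : r ≤ k) {T : ℕ} (hT : 16 * r * k * log d / ε ^ 2 < T + 1) :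
    0 < T ∧ k * log (d + 1) / (ε / (2 * r)) + T * (ε / (2 * r) * r) ≤ T * ε := by
  have hr : 0 < r := hε.trans hεr
  have hd' : (2 : ℝ) ≤ d := by exact_mod_cast hd
  have hlogd : 0.69 < log d :=
    lt_of_lt_of_le (by linarith [log_two_gt_d9]) (log_le_log two_pos hd')
  have hlogd1 : log (d + 1) ≤ 2 * log d := by
    calc log (d + 1) ≤ log (d ^ 2) := log_le_log (by positivity) (by nlinarith)
      _ = 2 * log d := by rw [log_pow]; norm_num
  have hε2 : ε ^ 2 < r * k := by nlinarith
  rw [div_lt_iff₀ (pow_pos hε 2)] at hT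
  have hT2 : 8 * r * k * log d ≤ T * ε ^ 2 := by nlinarith
  refine ⟨by exact_mod_cast (by nlinarith : (0 : ℝ) < T), ?_⟩
  have e1 : ε / (2 * r) * r = ε / 2 := by field_simp
  have e2 : k * log (d + 1) / (ε / (2 * r)) = 2 * r * k * log (d + 1) / ε := by field_simp
  rw [e1, e2, div_add' _ _ _ hε.ne', div_le_iff₀ hε]
  nlinarith [mul_le_mul_of_nonneg_left hlogd1 (by nlinarith : (0 : ℝ) ≤ 2 * r * k)]

section Cover

variable {d m : ℕ}

noncomputable def winnowCover (x : Fin m → Fin d → ℝ) (k η : ℝ) (T : ℕ) : Finset (Fin d → ℝ) :=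
  univ.image fun f : Fin T → Fin m × SignType => coverPoint k η (∑ t, grad x (f t))

lemma nonneg_and_sum_abs_le_of_mem_winnowCover {x : Fin m → Fin d → ℝ} {k : ℝ} (hk : 0 ≤ k)
    {η : ℝ} {T : ℕ} {v : Fin d → ℝ} (hv : v ∈ winnowCover x k η T) :
    0 ≤ v ∧ ∑ j, |v j| ≤ k := by
  obtain ⟨f, -, rfl⟩ := mem_image.1 hv
  exact ⟨coverPoint_nonneg hk _ _, sum_abs_coverPoint_le hk _ _⟩

lemma log_card_winnowCover_le [Nonempty (Fin m)] (x : Fin m → Fin d → ℝ) (k η : ℝ) (T : ℕ) :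
    log (winnowCover x k η T).card ≤ T * log (3 * m) := by
  have hcard : (Fintype.card (Fin m × SignType) : ℝ) = 3 * m := by
    rw [Fintype.card_prod, Fintype.card_fin, show Fintype.card SignType = 3 from rfl]
    push_cast
    ring
  exact hcard ▸ log_card_image_pi_le T _

theorem exists_mem_winnowCover_near [Nonempty (Fin m)] (hd : 1 < d) {x : Fin m → Fin d → ℝ}
    (hx : ∀ i j, x i j ∈ Set.Icc 0 1) {k r ε : ℝ} (hr : 0 ≤ r) (hrk : r ≤ k) (hε : 0 < ε)
    {w : Fin d → ℝ} (hw0 : 0 ≤ w) (hwk : ∑ j, w j ≤ k) :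
    ∃ v ∈ winnowCover x k (ε / (2 * r)) ⌊16 * r * k * log d / ε ^ 2⌋₊, ∀ i,
      |min (v ⬝ᵥ x i) r - min (w ⬝ᵥ x i) r| ≤ ε := by
  rcases le_or_gt r ε with hrε | hεr
  · refine ⟨_, mem_image_of_mem _ (mem_univ fun _ => (Classical.arbitrary _, 0)), fun i => ?_⟩
    have hxi : 0 ≤ x i := fun j => (hx i j).1
    exact (abs_min_sub_min_le (dotProduct_nonneg_of_nonneg (coverPoint_nonneg (hr.trans hrk) _ _)
      hxi) (dotProduct_nonneg_of_nonneg hw0 hxi) hr).trans hrε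
  · obtain ⟨hT, hTε⟩ := regret_add_le_of_horizon hd hε hεr hrk (Nat.lt_floor_add_one _)
    obtain ⟨f, hf⟩ := exists_coverPoint_near hx ((hε.trans hεr).trans_le hrk)
      (div_pos hε (by linarith)) (by rw [div_le_one (by linarith)]; linarith) hr hT hTε hw0 hwk
    exact ⟨_, mem_image_of_mem _ (mem_univ f), hf⟩

end Cover

end WinnowCover

open WinnowCover in
/-- Covering number bound for the Winnow loss class on all-positive samples: for
`k ≥ r ≥ 0`, `θ = r − 1/2`, and instances `x_1,…,x_m ∈ [0,1]^d` with label `+1`, for every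
`ε > 0` there is a proper `(∞,ε)`-cover `V` of `{w ≥ 0 : ‖w‖₁ ≤ k}` under the loss
`w ↦ [1/2 − (⟨w,x_i⟩ − θ)]₊` with `ln |V| ≤ 16·r·k·ln(d)·ln(3m)/ε²`. -/
theorem stmt16 (d m : ℕ) (hd : 1 < d) (hm : 1 ≤ m) (k r : ℝ) (hr : 0 ≤ r) (hrk : r ≤ k)
    (x : Fin m → Fin d → ℝ) (hx : ∀ i j, x i j ∈ Set.Icc (0 : ℝ) 1)
    (ε : ℝ) (hε : 0 < ε) :
    ∃ V : Finset (Fin d → ℝ),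
      (∀ v ∈ V, (∀ j, 0 ≤ v j) ∧ (∑ j, |v j|) ≤ k) ∧
      (∀ w : Fin d → ℝ, (∀ j, 0 ≤ w j) → (∑ j, |w j|) ≤ k →
        ∃ v ∈ V, ∀ i,
          |max 0 (1 / 2 - ((∑ j, w j * x i j) - (r - 1 / 2))) -
            max 0 (1 / 2 - ((∑ j, v j * x i j) - (r - 1 / 2)))| ≤ ε) ∧
      Real.log V.card ≤ 16 * r * k * Real.log d * Real.log (3 * m) / ε ^ 2 := by
  have : Nonempty (Fin m) := ⟨⟨0, hm⟩⟩
  have hk : 0 ≤ k := hr.trans hrk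
  refine ⟨winnowCover x k (ε / (2 * r)) ⌊16 * r * k * log d / ε ^ 2⌋₊,
    fun v hv => nonneg_and_sum_abs_le_of_mem_winnowCover hk hv, fun w hw0 hwk => ?_, ?_⟩
  · obtain ⟨v, hv, hvw⟩ := exists_mem_winnowCover_near hd hx hr hrk hε hw0
      (by simpa only [abs_of_nonneg (hw0 _)] using hwk)
    exact ⟨v, hv, fun i => (abs_hinge_sub_hinge _ _ r).trans_le (hvw i)⟩
  · calc _ ≤ ⌊16 * r * k * log d / ε ^ 2⌋₊ * log (3 * m) := log_card_winnowCover_le x k _ _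
      _ ≤ 16 * r * k * log d / ε ^ 2 * log (3 * m) := by
          gcongr
          · exact log_nonneg (by norm_cast; omega)
          · exact Nat.floor_le (by have := log_nonneg (Nat.one_le_cast.2 hd.le); positivity)
      _ = _ := by ring
end
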